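/- arXiv:0712.0804 — 12 statements merged into one kernel-verified Lean document; each statement's English description precedes it below -/
import Mathlib

section
/- Let H be a connected locally semicomplete digraph that is not strong. If A and B are distinct strong components of H such that there is at least one arc between a vertex of A and a vertex of B, then either every vertex of A dominates every vertex of B, or every vertex of B dominates every vertex of A. -/
open Relation

/-- Helper: if `S` and `T` are distinct strong components and `a → b` with `a ∈ S`,
`b ∈ T`, then every vertex of `S` dominates every vertex of `T`. -/
theorem stmt_0_aux {V : Type} (A : V → V → Prop)
    (hloc_out : ∀ x y z : V, y ≠ z → A x y → A x z → (A y z ∨ A z y))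
    (hloc_in : ∀ x y z : V, y ≠ z → A y x → A z x → (A y z ∨ A z y))
    (S T : Set V) (xS xT : V)
    (hSdef : S = {y | Relation.ReflTransGen A xS y ∧ Relation.ReflTransGen A y xS})
    (hTdef : T = {y | Relation.ReflTransGen A xT y ∧ Relation.ReflTransGen A y xT})
    (hST : S ≠ T)
    (a b : V) (haS : a ∈ S) (hbT : b ∈ T) (hab : A a b) :
    ∀ a' ∈ S, ∀ b' ∈ T, A a' b' := by
  have memS : ∀ u, u ∈ S ↔ (ReflTransGen A xS u ∧ ReflTransGen A u xS) := by
    intro u; rw [hSdef]; rfl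
  have memT : ∀ u, u ∈ T ↔ (ReflTransGen A xT u ∧ ReflTransGen A u xT) := by
    intro u; rw [hTdef]; rfl
  -- if xS and xT are mutually reachable then S = T, contradiction
  have key : ReflTransGen A xS xT → ReflTransGen A xT xS → False := by
    intro h1 h2
    apply hST
    ext y
    rw [memS, memT]
    constructor
    · rintro ⟨p, q⟩; exact ⟨h2.trans p, q.trans h1⟩
    · rintro ⟨p, q⟩; exact ⟨h1.trans p, q.trans h2⟩
  have hSa := (memS a).mp haS
  have hTb := (memT b).mp hbT
  -- no arc from T to S
  have noarc : ∀ u ∈ T, ∀ v ∈ S, ¬ A u v := by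
    intro u hu v hv huv
    have hu' := (memT u).mp hu
    have hv' := (memS v).mp hv
    exact key (hSa.1.trans ((ReflTransGen.single hab).trans hTb.2))
      (hu'.1.trans ((ReflTransGen.single huv).trans hv'.2))
  -- S and T are disjoint
  have disj : ∀ v, v ∈ S → v ∈ T → False := by
    intro v hv hv'
    have h1 := (memS v).mp hv
    have h2 := (memT v).mp hv'
    exact key (h1.1.trans h2.2) (h2.1.trans h1.2)
  -- Claim 1: a dominates every vertex of T
  have claim1 : ∀ y, ReflTransGen A y b → y ∈ T → A a y := by
    intro y h
    induction h using ReflTransGen.head_induction_on with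
    | refl => intro _; exact hab
    | head h' hcb ih =>
      rename_i y' c
      intro hy'T
      have hy' := (memT y').mp hy'T
      have hcT : c ∈ T := (memT c).mpr
        ⟨hy'.1.trans (ReflTransGen.single h'), hcb.trans hTb.2⟩
      have hac : A a c := ih hcT
      have hne : a ≠ y' := fun h => disj a haS (h ▸ hy'T)
      rcases hloc_in c a y' hne hac h' with h1 | h1
      · exact h1
      · exact absurd h1 (noarc y' hy'T a haS)
  -- Claim 2: knowing a dominates y ∈ T, every vertex of S dominates y
  have claim2 : ∀ y ∈ T, ∀ a', ReflTransGen A a a' → a' ∈ S → A a' y := by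
    intro y hyT a' h
    induction h with
    | refl => intro _; exact claim1 y (((memT y).mp hyT).2.trans hTb.1) hyT
    | tail hac hcd ih =>
      rename_i c d
      intro hdS
      have hd := (memS d).mp hdS
      have hcS : c ∈ S := (memS c).mpr
        ⟨hSa.1.trans hac, (ReflTransGen.single hcd).trans hd.2⟩
      have hcy : A c y := ih hcS
      have hne : d ≠ y := fun h => disj d hdS (h ▸ hyT)
      rcases hloc_out c d y hne hcd hcy with h1 | h1
      · exact h1
      · exact absurd h1 (noarc y hyT d hdS)
  intro a' ha' b' hb'
  have hab' : A a b' := claim1 b' (((memT b').mp hb').2.trans hTb.1) hb'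
  exact claim2 b' hb' a' (hSa.2.trans ((memS a').mp ha').1) ha'

/-- In a connected, non-strong locally semicomplete digraph, if `S` and `T`
are distinct strong components with at least one arc between them, then `S → T` or `T → S`. -/
theorem stmt_0 {V : Type} [Fintype V] (A : V → V → Prop)
    (hirr : ∀ v, ¬ A v v)
    (hloc_out : ∀ x y z : V, y ≠ z → A x y → A x z → (A y z ∨ A z y))
    (hloc_in : ∀ x y z : V, y ≠ z → A y x → A z x → (A y z ∨ A z y))
    (hconn : ∀ x y : V, Relation.ReflTransGen (fun u w => A u w ∨ A w u) x y)
    (hnotstrong : ¬ ∀ x y : V, Relation.ReflTransGen A x y)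
    (S T : Set V)
    (hS : ∃ x, S = {y | Relation.ReflTransGen A x y ∧ Relation.ReflTransGen A y x})
    (hT : ∃ x, T = {y | Relation.ReflTransGen A x y ∧ Relation.ReflTransGen A y x})
    (hST : S ≠ T)
    (harc : ∃ a ∈ S, ∃ b ∈ T, A a b ∨ A b a) :
    (∀ a ∈ S, ∀ b ∈ T, A a b) ∨ (∀ b ∈ T, ∀ a ∈ S, A b a) := by
  obtain ⟨xS, hSdef⟩ := hS
  obtain ⟨xT, hTdef⟩ := hT
  obtain ⟨a, haS, b, hbT, hab | hba⟩ := harc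
  · exact Or.inl (stmt_0_aux A hloc_out hloc_in S T xS xT hSdef hTdef hST a b haS hbT hab)
  · exact Or.inr (stmt_0_aux A hloc_out hloc_in T S xT xS hTdef hSdef hST.symm b a hbT haS hba)
end

section
/- Let H be a connected locally semicomplete digraph that is not strong. Then the strong components of H can be ordered in a unique way D_1, D_2, …, D_p such that there is no arc from a vertex of D_j to a vertex of D_i whenever j > i, and every vertex of D_i dominates every vertex of D_{i+1} for i = 1, …, p−1. -/
/-!
If `x` reaches `v` and `y → v`, local semicompleteness (applied at the last arc into `v`, and
inductively along the path) makes `x` and `y` comparable under reachability; dually for arcs out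
of `v`. Following an undirected path then shows that reachability is total, so the strong
components are linearly ordered and can be listed by the number of vertices that reach them.
An arc `a → b` with `b` not reaching back to `a` propagates, again by local semicompleteness,
to every pair of vertices of the two components. Between consecutive components such an arc
exists: a path from the first to the second leaves the first component by an arc whose head
lies in no component strictly in between.
-/

open Relation

theorem Relation.ReflTransGen.exists_rel_of_not {α : Type*} {r : α → α → Prop}
    {P : α → Prop} {x y : α} (hxy : ReflTransGen r x y) (hx : P x) (hy : ¬ P y) :
    ∃ u w, ReflTransGen r x u ∧ P u ∧ r u w ∧ ¬ P w ∧ ReflTransGen r w y := by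
  induction hxy using ReflTransGen.head_induction_on with
  | refl => exact absurd hx hy
  | @head x c hxc hcy ih =>
    by_cases hc : P c
    · obtain ⟨u, w, hcu, hu, huw, hw, hwy⟩ := ih hc
      exact ⟨u, w, hcu.head hxc, hu, huw, hw, hwy⟩
    · exact ⟨x, c, .refl, hx, hxc, hc, hcy⟩

theorem List.Pairwise.lt_iff_of_comp {α β : Type*} [Preorder β] {f : α → β} {L : List α}
    (hL : L.Pairwise fun a b => f a < f b) {i j : ℕ} (hi : i < L.length) (hj : j < L.length) :
    f L[i] < f L[j] ↔ i < j :=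
  StrictMono.lt_iff_lt (f := fun k : Fin L.length => f L[k])
    (fun _ _ hkl => hL.rel_get_of_lt hkl) (a := ⟨i, hi⟩) (b := ⟨j, hj⟩)

section LocallySemicomplete

variable {V : Type*} {A : V → V → Prop}

def IsOutLocallySemicomplete (A : V → V → Prop) : Prop :=
  ∀ x y z : V, y ≠ z → A x y → A x z → A y z ∨ A z y

def IsInLocallySemicomplete (A : V → V → Prop) : Prop :=
  ∀ x y z : V, y ≠ z → A y x → A z x → A y z ∨ A z y

theorem IsInLocallySemicomplete.reflTransGen_or_of_tail (hin : IsInLocallySemicomplete A)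
    {x v y : V} (hxv : ReflTransGen A x v) (hyv : A y v) :
    ReflTransGen A x y ∨ ReflTransGen A y x := by
  induction hxv generalizing y with
  | refl => exact .inr (.single hyv)
  | @tail w v hxw hwv ih =>
    by_cases hwy : w = y
    · exact .inl (hwy ▸ hxw)
    · rcases hin v w y hwy hwv hyv with h | h
      · exact .inl (hxw.tail h)
      · exact ih h

theorem IsOutLocallySemicomplete.reflTransGen_or_of_head (hout : IsOutLocallySemicomplete A)
    {v x y : V} (hvx : ReflTransGen A v x) (hvy : A v y) :
    ReflTransGen A x y ∨ ReflTransGen A y x := by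
  induction hvx using ReflTransGen.head_induction_on generalizing y with
  | refl => exact .inl (.single hvy)
  | @head v c hvc hcx ih =>
    by_cases hcy : c = y
    · exact .inr (hcy ▸ hcx)
    · rcases hout v c y hcy hvc hvy with h | h
      · exact ih h
      · exact .inr (.head h hcx)

theorem reflTransGen_or_reflTransGen (hout : IsOutLocallySemicomplete A)
    (hin : IsInLocallySemicomplete A) {x y : V}
    (hxy : ReflTransGen (fun u w => A u w ∨ A w u) x y) :
    ReflTransGen A x y ∨ ReflTransGen A y x := by
  induction hxy with
  | refl => exact .inl .refl
  | @tail w y _ hwy ih =>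
    rcases ih with hxw | hwx <;> rcases hwy with hwy | hyw
    · exact .inl (hxw.tail hwy)
    · exact hin.reflTransGen_or_of_tail hxw hyw
    · exact hout.reflTransGen_or_of_head hwx hwy
    · exact .inr (.head hyw hwx)

def strongComponent (A : V → V → Prop) (x : V) : Set V :=
  {y | ReflTransGen A x y ∧ ReflTransGen A y x}

theorem mem_strongComponent_self (x : V) : x ∈ strongComponent A x :=
  ⟨.refl, .refl⟩

theorem strongComponent_eq {x y : V} (hxy : ReflTransGen A x y) (hyx : ReflTransGen A y x) :
    strongComponent A x = strongComponent A y := by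
  ext z
  exact ⟨fun hz => ⟨hyx.trans hz.1, hz.2.trans hxy⟩,
    fun hz => ⟨hxy.trans hz.1, hz.2.trans hyx⟩⟩

theorem strongComponent_eq_of_mem {x y : V} (hy : y ∈ strongComponent A x) :
    strongComponent A x = strongComponent A y :=
  strongComponent_eq hy.1 hy.2

theorem IsInLocallySemicomplete.rel_of_mem_strongComponent (hin : IsInLocallySemicomplete A)
    {a b b' : V} (hab : A a b) (hba : ¬ ReflTransGen A b a) (hb' : b' ∈ strongComponent A b) :
    A a b' := by
  obtain ⟨hbb', hb'b⟩ := hb'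
  induction hb'b using ReflTransGen.head_induction_on with
  | refl => exact hab
  | @head c w hcw _ ih =>
    have haw : A a w := ih (hbb'.tail hcw)
    have hca : c ≠ a := fun h => hba (h ▸ hbb')
    exact (hin w c a hca hcw haw).resolve_left fun hca => hba (hbb'.tail hca)

theorem IsOutLocallySemicomplete.rel_of_mem_strongComponent (hout : IsOutLocallySemicomplete A)
    {a a' b : V} (hab : A a b) (hba : ¬ ReflTransGen A b a) (ha' : a' ∈ strongComponent A a) :
    A a' b := by
  obtain ⟨haa', ha'a⟩ := ha'
  induction haa' with
  | refl => exact hab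
  | @tail c a' _ hca' ih =>
    have hcb : A c b := ih (.head hca' ha'a)
    have ha'b : a' ≠ b := fun h => hba (h ▸ ha'a)
    exact (hout c a' b ha'b hca' hcb).resolve_right fun hba' => hba (ha'a.head hba')

theorem rel_of_mem_strongComponent (hout : IsOutLocallySemicomplete A)
    (hin : IsInLocallySemicomplete A) {a b a' b' : V} (hab : A a b) (hba : ¬ ReflTransGen A b a)
    (ha' : a' ∈ strongComponent A a) (hb' : b' ∈ strongComponent A b) : A a' b' :=
  hin.rel_of_mem_strongComponent (hout.rel_of_mem_strongComponent hab hba ha')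
    (fun hba' => hba (hba'.trans ha'.2)) hb'

noncomputable def reachRank (A : V → V → Prop) (S : Set V) : ℕ :=
  {v | ∃ x ∈ S, ReflTransGen A v x}.ncard

theorem reachRank_strongComponent (x : V) :
    reachRank A (strongComponent A x) = {v | ReflTransGen A v x}.ncard := by
  have : {v | ∃ y ∈ strongComponent A x, ReflTransGen A v y} = {v | ReflTransGen A v x} := by
    ext v
    exact ⟨fun ⟨_, hy, hvy⟩ => hvy.trans hy.2,
      fun hvx => ⟨x, mem_strongComponent_self x, hvx⟩⟩
  rw [reachRank, this]

section Finite

variable [Finite V]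

theorem reachRank_le_of_reflTransGen {x y : V} (hxy : ReflTransGen A x y) :
    reachRank A (strongComponent A x) ≤ reachRank A (strongComponent A y) := by
  simp only [reachRank_strongComponent]
  exact Set.ncard_le_ncard fun v hvx => ReflTransGen.trans hvx hxy

theorem reachRank_lt_of_reflTransGen {x y : V} (hxy : ReflTransGen A x y)
    (hyx : ¬ ReflTransGen A y x) :
    reachRank A (strongComponent A x) < reachRank A (strongComponent A y) := by
  simp only [reachRank_strongComponent]
  exact Set.ncard_lt_ncard (ssubset_of_subset_not_subset
    (fun v hvx => ReflTransGen.trans hvx hxy) fun h => hyx (h ReflTransGen.refl))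

theorem reachRank_lt_iff (htotal : ∀ x y : V, ReflTransGen A x y ∨ ReflTransGen A y x)
    {x y : V} :
    reachRank A (strongComponent A x) < reachRank A (strongComponent A y) ↔
      ReflTransGen A x y ∧ ¬ ReflTransGen A y x := by
  refine ⟨fun h => ?_, fun h => reachRank_lt_of_reflTransGen h.1 h.2⟩
  by_contra hxy
  have hyx : ReflTransGen A y x := (htotal x y).elim (fun h => by tauto) id
  exact (reachRank_le_of_reflTransGen hyx).not_gt h

theorem strongComponent_eq_of_reachRank_eq
    (htotal : ∀ x y : V, ReflTransGen A x y ∨ ReflTransGen A y x) {x y : V}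
    (h : reachRank A (strongComponent A x) = reachRank A (strongComponent A y)) :
    strongComponent A x = strongComponent A y := by
  have hxy := mt (reachRank_lt_iff htotal).mpr h.not_lt
  have hyx := mt (reachRank_lt_iff htotal).mpr h.not_gt
  rcases htotal x y with h' | h' <;> exact strongComponent_eq (by tauto) (by tauto)

theorem exists_list_strongComponent_pairwise_reachRank_lt
    (htotal : ∀ x y : V, ReflTransGen A x y ∨ ReflTransGen A y x) :
    ∃ L : List (Set V), L.Nodup ∧ (∀ S, S ∈ L ↔ ∃ x, S = strongComponent A x) ∧
      L.Pairwise fun S T => reachRank A S < reachRank A T := by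
  classical
  let le : Set V → Set V → Bool := fun S T => decide (reachRank A S ≤ reachRank A T)
  let L := (Set.finite_range (strongComponent A)).toFinset.toList.mergeSort le
  have hmem : ∀ S, S ∈ L ↔ ∃ x, S = strongComponent A x := by
    simp [L, eq_comm]
  have hnodup : L.Nodup := (List.mergeSort_perm _ _).nodup_iff.mpr (Finset.nodup_toList _)
  have hle : L.Pairwise fun S T => reachRank A S ≤ reachRank A T := by
    simpa [L, le] using List.pairwise_mergeSort (le := le)
      (by simpa [le] using fun _ _ _ => le_trans) (by simpa [le] using fun _ _ => le_total _ _) _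
  refine ⟨L, hnodup, hmem, (hle.and hnodup).imp_of_mem fun hS hT ⟨hST, hne⟩ => ?_⟩
  obtain ⟨x, rfl⟩ := (hmem _).mp hS
  obtain ⟨y, rfl⟩ := (hmem _).mp hT
  exact hST.lt_of_ne fun h => hne (strongComponent_eq_of_reachRank_eq htotal h)

theorem not_rel_of_pairwise_reachRank_lt {L : List (Set V)}
    (hmem : ∀ S ∈ L, ∃ x, S = strongComponent A x)
    (hL : L.Pairwise fun S T => reachRank A S < reachRank A T) {i j : Fin L.length} (hij : i < j)
    {a b : V} (ha : a ∈ L.get j) (hb : b ∈ L.get i) : ¬ A a b := by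
  obtain ⟨x, hx⟩ := hmem _ (L.get_mem i)
  obtain ⟨y, hy⟩ := hmem _ (L.get_mem j)
  have hLi : L.get i = strongComponent A b := hx ▸ strongComponent_eq_of_mem (hx ▸ hb)
  have hLj : L.get j = strongComponent A a := hy ▸ strongComponent_eq_of_mem (hy ▸ ha)
  have hlt := hL.rel_get_of_lt hij
  rw [hLi, hLj] at hlt
  exact fun hab => (reachRank_le_of_reflTransGen (.single hab)).not_gt hlt

theorem rel_of_pairwise_reachRank_lt (hout : IsOutLocallySemicomplete A)
    (hin : IsInLocallySemicomplete A)
    (htotal : ∀ x y : V, ReflTransGen A x y ∨ ReflTransGen A y x)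
    {L : List (Set V)} (hmem : ∀ S, S ∈ L ↔ ∃ x, S = strongComponent A x)
    (hL : L.Pairwise fun S T => reachRank A S < reachRank A T) {i : ℕ} (hi : i + 1 < L.length)
    {a b : V} (ha : a ∈ L[i]) (hb : b ∈ L[i + 1]) : A a b := by
  obtain ⟨x, hx⟩ := (hmem _).mp (L.getElem_mem (Nat.lt_of_succ_lt hi))
  obtain ⟨y, hy⟩ := (hmem _).mp (L.getElem_mem hi)
  have hLi : L[i] = strongComponent A a := hx ▸ strongComponent_eq_of_mem (hx ▸ ha)
  have hLi1 : L[i + 1] = strongComponent A b := hy ▸ strongComponent_eq_of_mem (hy ▸ hb)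
  have hab := (hL.lt_iff_of_comp (Nat.lt_of_succ_lt hi) hi).mpr (Nat.lt_succ_self i)
  rw [hLi, hLi1, reachRank_lt_iff htotal] at hab
  obtain ⟨u, w, hau, hua, huw, hwa, hwb⟩ :=
    hab.1.exists_rel_of_not (P := (ReflTransGen A · a)) .refl hab.2
  obtain ⟨m, hm, hLm⟩ := List.mem_iff_getElem.mp ((hmem _).mpr ⟨w, rfl⟩)
  have him : i < m := by
    rw [← hL.lt_iff_of_comp (Nat.lt_of_succ_lt hi) hm, hLi, hLm]
    exact reachRank_lt_of_reflTransGen (hau.tail huw) hwa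
  have hbw : ReflTransGen A b w := by
    by_contra hbw
    have hmi : m < i + 1 := by
      rw [← hL.lt_iff_of_comp hm hi, hLi1, hLm]
      exact reachRank_lt_of_reflTransGen hwb hbw
    omega
  exact rel_of_mem_strongComponent hout hin huw (fun hwu => hwa (hwu.trans hua))
    ⟨hua, hau⟩ ⟨hwb, hbw⟩

theorem pairwise_reachRank_lt_of_rel {L : List (Set V)} (hnodup : L.Nodup)
    (hmem : ∀ S ∈ L, ∃ x, S = strongComponent A x)
    (hrel : ∀ i (hi : i + 1 < L.length), ∀ a ∈ L[i], ∀ b ∈ L[i + 1], A a b) :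
    L.Pairwise fun S T => reachRank A S < reachRank A T := by
  refine List.pairwise_map.mp (List.isChain_iff_pairwise.mp (List.isChain_iff_getElem.mpr ?_))
  intro i hi
  simp only [List.getElem_map]
  rw [List.length_map] at hi
  obtain ⟨x, hx⟩ := hmem _ (L.getElem_mem (Nat.lt_of_succ_lt hi))
  obtain ⟨y, hy⟩ := hmem _ (L.getElem_mem hi)
  have hxy : A x y :=
    hrel i hi x (hx ▸ mem_strongComponent_self x) y (hy ▸ mem_strongComponent_self y)
  rw [hx, hy]
  refine reachRank_lt_of_reflTransGen (.single hxy) fun hyx => ?_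
  have := hnodup.getElem_inj_iff.mp
    (hx.trans ((strongComponent_eq (.single hxy) hyx).trans hy.symm))
  omega

end Finite

end LocallySemicomplete

theorem stmt_2_general {V : Type} [Fintype V] (A : V → V → Prop)
    (hloc_out : ∀ x y z : V, y ≠ z → A x y → A x z → (A y z ∨ A z y))
    (hloc_in : ∀ x y z : V, y ≠ z → A y x → A z x → (A y z ∨ A z y))
    (hconn : ∀ x y : V, Relation.ReflTransGen (fun u w => A u w ∨ A w u) x y) :
    ∃! L : List (Set V),
      L.Nodup ∧
      (∀ S : Set V,
        ((∃ x, S = {y | Relation.ReflTransGen A x y ∧ Relation.ReflTransGen A y x}) ↔ S ∈ L)) ∧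
      (∀ i j : Fin L.length, i < j → ∀ a ∈ L.get j, ∀ b ∈ L.get i, ¬ A a b) ∧
      (∀ i : ℕ, (h : i + 1 < L.length) →
        ∀ a ∈ L.get ⟨i, Nat.lt_of_succ_lt h⟩, ∀ b ∈ L.get ⟨i + 1, h⟩, A a b) := by
  have htotal x y := reflTransGen_or_reflTransGen hloc_out hloc_in (hconn x y)
  obtain ⟨L, hnodup, hmem, hL⟩ := exists_list_strongComponent_pairwise_reachRank_lt htotal
  refine ⟨L, ⟨hnodup, fun S => (hmem S).symm, ?_, ?_⟩, ?_⟩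
  · exact fun i j hij a ha b hb =>
      not_rel_of_pairwise_reachRank_lt (fun S hS => (hmem S).mp hS) hL hij ha hb
  · exact fun i hi a ha b hb =>
      rel_of_pairwise_reachRank_lt hloc_out hloc_in htotal hmem hL hi ha hb
  · rintro L' ⟨hnodup', hmem', -, hrel'⟩
    have hL' := pairwise_reachRank_lt_of_rel hnodup' (fun S hS => (hmem' S).mpr hS) hrel'
    have hperm : L'.Perm L := (List.perm_ext_iff_of_nodup hnodup' hnodup).mpr fun S =>
      (hmem' S).symm.trans (hmem S).symm
    exact hperm.eq_of_pairwise (fun _ _ _ _ hST hTS => absurd (hST.trans hTS) (lt_irrefl _))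
      hL' hL

/-- The strong components of a connected, non-strong locally semicomplete
digraph can be ordered in a unique way `D_1, …, D_p` with no arc from `D_j` to `D_i` for
`j > i`, and `D_i` dominating `D_{i+1}` for each `i < p`. -/
theorem stmt_2 {V : Type} [Fintype V] (A : V → V → Prop)
    (hirr : ∀ v, ¬ A v v)
    (hloc_out : ∀ x y z : V, y ≠ z → A x y → A x z → (A y z ∨ A z y))
    (hloc_in : ∀ x y z : V, y ≠ z → A y x → A z x → (A y z ∨ A z y))
    (hconn : ∀ x y : V, Relation.ReflTransGen (fun u w => A u w ∨ A w u) x y)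
    (hnotstrong : ¬ ∀ x y : V, Relation.ReflTransGen A x y) :
    ∃! L : List (Set V),
      L.Nodup ∧
      (∀ S : Set V,
        ((∃ x, S = {y | Relation.ReflTransGen A x y ∧ Relation.ReflTransGen A y x}) ↔ S ∈ L)) ∧
      (∀ i j : Fin L.length, i < j → ∀ a ∈ L.get j, ∀ b ∈ L.get i, ¬ A a b) ∧
      (∀ i : ℕ, (h : i + 1 < L.length) →
        ∀ a ∈ L.get ⟨i, Nat.lt_of_succ_lt h⟩, ∀ b ∈ L.get ⟨i + 1, h⟩, A a b) :=
  stmt_2_general A hloc_out hloc_in hconn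
end

section
/- Let H be a connected acyclic locally semicomplete digraph. Then there is a unique ordering v_1, v_2, …, v_p of the vertices of H such that there is no arc v_j→v_i with j > i and v_i→v_{i+1} for every i = 1, …, p−1, and this ordering is a Min-Max ordering of H; in particular, H admits a Min-Max ordering. -/
/-!
Local semicompleteness lets comparability under reachability propagate along arcs, so in a
connected locally semicomplete digraph any two distinct vertices are joined by a directed path;
with acyclicity, reachability is a strict linear order on the vertices. The required orderings are
exactly the increasing listing in this order: a chain of arcs between consecutive positions forces
the listing to be increasing, and conversely consecutive vertices of the reachability order are
joined by an arc. Finally, an arc `a → c` forces arcs `a → b → c` for every `b` strictly between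
`a` and `c` (induct along a path from `a` to `b`), which gives the Min-Max property.
-/

open Relation

def IsLocallySemicomplete {V : Type*} (A : V → V → Prop) : Prop :=
  (∀ x y z, y ≠ z → A x y → A x z → A y z ∨ A z y) ∧
  (∀ x y z, y ≠ z → A y x → A z x → A y z ∨ A z y)

namespace IsLocallySemicomplete

variable {V : Type*} {A : V → V → Prop}

theorem swap (hA : IsLocallySemicomplete A) : IsLocallySemicomplete (Function.swap A) :=
  ⟨fun x y z hyz hxy hxz => (hA.2 x y z hyz hxy hxz).symm,
    fun x y z hyz hyx hzx => (hA.1 x y z hyz hyx hzx).symm⟩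

theorem eq_or_transGen_or_transGen_of_arc_of_transGen (hA : IsLocallySemicomplete A) {x y z : V}
    (hxz : A x z) (hyz : TransGen A y z) : x = y ∨ TransGen A x y ∨ TransGen A y x := by
  induction hyz generalizing x with
  | single hyz =>
    by_cases hxy : x = y
    · exact .inl hxy
    · rcases hA.2 _ x _ hxy hxz hyz with h | h
      exacts [.inr (.inl (.single h)), .inr (.inr (.single h))]
  | @tail w z hyw hwz ih =>
    by_cases hxw : x = w
    · exact .inr (.inr (hxw ▸ hyw))
    · rcases hA.2 _ x w hxw hxz hwz with hxw' | hwx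
      · exact ih hxw'
      · exact .inr (.inr (hyw.tail hwx))

theorem eq_or_transGen_or_transGen_of_transGen_of_arc (hA : IsLocallySemicomplete A) {x y z : V}
    (hzx : A z x) (hzy : TransGen A z y) : x = y ∨ TransGen A x y ∨ TransGen A y x := by
  have := hA.swap.eq_or_transGen_or_transGen_of_arc_of_transGen hzx (transGen_swap.2 hzy)
  simpa only [transGen_swap, or_comm (a := TransGen A y x)] using this

theorem transGen_or_transGen_of_ne (hA : IsLocallySemicomplete A)
    (hconn : ∀ x y, ReflTransGen (fun u w => A u w ∨ A w u) x y) {x y : V} (hxy : x ≠ y) :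
    TransGen A x y ∨ TransGen A y x := by
  suffices x = y ∨ TransGen A x y ∨ TransGen A y x from this.resolve_left hxy
  clear hxy
  induction hconn x y with
  | refl => exact .inl rfl
  | @tail w y _ hwy ih =>
    rcases ih with rfl | hxw | hwx
    · exact .inr (hwy.imp .single .single)
    · rcases hwy with hwy | hyw
      · exact .inr (.inl (hxw.tail hwy))
      · rcases hA.eq_or_transGen_or_transGen_of_arc_of_transGen hyw hxw with h | h | h
        exacts [.inl h.symm, .inr (.inr h), .inr (.inl h)]
    · rcases hwy with hwy | hyw
      · rcases hA.eq_or_transGen_or_transGen_of_transGen_of_arc hwy hwx with h | h | h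
        exacts [.inl h.symm, .inr (.inr h), .inr (.inl h)]
      · exact .inr (.inr (hwx.head hyw))

theorem isStrictTotalOrder_transGen (hA : IsLocallySemicomplete A)
    (hconn : ∀ x y, ReflTransGen (fun u w => A u w ∨ A w u) x y)
    (hacyc : ∀ x y, A x y → ¬ ReflTransGen A y x) : IsStrictTotalOrder V (TransGen A) where
  trichotomous x y hxy hyx := by
    by_contra hne
    exact (hA.transGen_or_transGen_of_ne hconn hne).elim hxy hyx
  irrefl x hx := by
    obtain ⟨y, hxy, hyx⟩ := TransGen.head'_iff.1 hx
    exact hacyc x y hxy hyx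
  trans _ _ _ := TransGen.trans

end IsLocallySemicomplete

section ReachabilityOrder

variable {V : Type*} [LinearOrder V] {A : V → V → Prop}

theorem lt_of_arc (hlt : ∀ a b, a < b ↔ TransGen A a b) {a b : V} (h : A a b) : a < b :=
  (hlt a b).2 (.single h)

theorem arc_of_covBy (hlt : ∀ a b, a < b ↔ TransGen A a b) {a b : V} (h : a ⋖ b) : A a b := by
  cases (hlt a b).1 h.lt with
  | single hab => exact hab
  | @tail c _ hac hcb => exact absurd (lt_of_arc hlt hcb) (h.2 ((hlt a c).2 hac))

theorem IsLocallySemicomplete.arc_of_arc_of_arc_of_lt (hA : IsLocallySemicomplete A)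
    (hlt : ∀ a b, a < b ↔ TransGen A a b) {x b c : V} (hxb : A x b) (hxc : A x c) (hbc : b < c) :
    A b c :=
  (hA.1 x b c hbc.ne hxb hxc).resolve_right fun hcb => (lt_of_arc hlt hcb).not_gt hbc

theorem IsLocallySemicomplete.arc_of_lt_of_arc_of_arc (hA : IsLocallySemicomplete A)
    (hlt : ∀ a b, a < b ↔ TransGen A a b) {a b x : V} (hab : a < b) (hax : A a x) (hbx : A b x) :
    A a b :=
  (hA.2 x a b hab.ne hax hbx).resolve_right fun hba => (lt_of_arc hlt hba).not_gt hab

theorem IsLocallySemicomplete.arc_and_arc_of_arc_of_lt_of_lt (hA : IsLocallySemicomplete A)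
    (hlt : ∀ a b, a < b ↔ TransGen A a b) {a b c : V} (hac : A a c) (hab : a < b) (hbc : b < c) :
    A a b ∧ A b c := by
  induction (hlt a b).1 hab generalizing c with
  | single hab' => exact ⟨hab', hA.arc_of_arc_of_arc_of_lt hlt hab' hac hbc⟩
  | @tail w b haw hwb ih =>
    have hwc : A w c := (ih hac ((hlt a w).2 haw) ((lt_of_arc hlt hwb).trans hbc)).2
    have hbc' : A b c := hA.arc_of_arc_of_arc_of_lt hlt hwb hwc hbc
    exact ⟨hA.arc_of_lt_of_arc_of_arc hlt hab hac hbc', hbc'⟩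

theorem IsLocallySemicomplete.minMax (hA : IsLocallySemicomplete A)
    (hlt : ∀ a b, a < b ↔ TransGen A a b) {a b c d : V} (hab : a < b) (hcd : c < d)
    (had : A a d) (hbc : A b c) : A a c ∧ A b d := by
  have hbc' : b < c := lt_of_arc hlt hbc
  exact ⟨(hA.arc_and_arc_of_arc_of_lt_of_lt hlt had (hab.trans hbc') hcd).1,
    (hA.arc_and_arc_of_arc_of_lt_of_lt hlt had hab (hbc'.trans hcd)).2⟩

end ReachabilityOrder

section Ordering

variable {V : Type*} {A : V → V → Prop} {n : ℕ}

def IsHamiltonianTopologicalOrdering (A : V → V → Prop) (e : Fin n ≃ V) : Prop :=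
  (∀ i j : Fin n, i < j → ¬ A (e j) (e i)) ∧
    (∀ i j : Fin n, (i : ℕ) + 1 = (j : ℕ) → A (e i) (e j))

theorem Fin.covBy_iff_val_add_one_eq {i j : Fin n} : i ⋖ j ↔ (i : ℕ) + 1 = j :=
  Fin.covBy_iff.trans Nat.covBy_iff_add_one_eq

variable [LinearOrder V]

theorem IsHamiltonianTopologicalOrdering.strictMono (hlt : ∀ a b, a < b ↔ TransGen A a b)
    {e : Fin n ≃ V} (he : IsHamiltonianTopologicalOrdering A e) : StrictMono e :=
  strictMono_of_lt_succ fun _ hi =>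
    lt_of_arc hlt (he.2 _ _ (Fin.covBy_iff_val_add_one_eq.1 (Order.covBy_succ_of_not_isMax hi)))

theorem isHamiltonianTopologicalOrdering_iff [Fintype V] (hlt : ∀ a b, a < b ↔ TransGen A a b)
    (e : Fin (Fintype.card V) ≃ V) :
    IsHamiltonianTopologicalOrdering A e ↔ e = (monoEquivOfFin V rfl).toEquiv := by
  constructor
  · intro he
    ext i
    exact DFunLike.congr_fun (Subsingleton.elim
      ((he.strictMono hlt).orderIsoOfSurjective e e.surjective) (monoEquivOfFin V rfl)) i
  · rintro rfl
    refine ⟨fun i j hij hji => (lt_of_arc hlt hji).not_gt ((monoEquivOfFin V rfl).strictMono hij),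
      fun i j hij => arc_of_covBy hlt ?_⟩
    exact (apply_covBy_apply_iff (monoEquivOfFin V rfl)).2 (Fin.covBy_iff_val_add_one_eq.2 hij)

end Ordering

theorem stmt_3_general {V : Type} [Fintype V] (A : V → V → Prop)
    (hloc_out : ∀ x y z : V, y ≠ z → A x y → A x z → (A y z ∨ A z y))
    (hloc_in : ∀ x y z : V, y ≠ z → A y x → A z x → (A y z ∨ A z y))
    (hconn : ∀ x y : V, Relation.ReflTransGen (fun u w => A u w ∨ A w u) x y)
    (hacyc : ∀ x y : V, A x y → ¬ Relation.ReflTransGen A y x) :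
    (∃! e : Fin (Fintype.card V) ≃ V,
       (∀ i j : Fin (Fintype.card V), i < j → ¬ A (e j) (e i)) ∧
       (∀ i j : Fin (Fintype.card V), (i : ℕ) + 1 = (j : ℕ) → A (e i) (e j))) ∧
    (∀ e : Fin (Fintype.card V) ≃ V,
       ((∀ i j : Fin (Fintype.card V), i < j → ¬ A (e j) (e i)) ∧
        (∀ i j : Fin (Fintype.card V), (i : ℕ) + 1 = (j : ℕ) → A (e i) (e j))) →
       ∀ i j s r : Fin (Fintype.card V), i < j → s < r →
         A (e i) (e r) → A (e j) (e s) → A (e i) (e s) ∧ A (e j) (e r)) := by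
  classical
  have hA : IsLocallySemicomplete A := ⟨hloc_out, hloc_in⟩
  have := hA.isStrictTotalOrder_transGen hconn hacyc
  let : LinearOrder V := linearOrderOfSTO (TransGen A)
  have hlt : ∀ a b : V, a < b ↔ TransGen A a b := fun _ _ => Iff.rfl
  refine ⟨⟨_, (isHamiltonianTopologicalOrdering_iff hlt _).2 rfl,
    fun e he => (isHamiltonianTopologicalOrdering_iff hlt e).1 he⟩, ?_⟩
  intro e he i j s r hij hsr hir hjs
  have hmono : StrictMono e := IsHamiltonianTopologicalOrdering.strictMono hlt he
  exact hA.minMax hlt (hmono hij) (hmono hsr) hir hjs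

/-- A connected acyclic locally semicomplete digraph has a unique ordering
`v_1, …, v_p` of its vertices with no backward arcs and `v_i → v_{i+1}` for all `i < p`,
and any such ordering is a Min-Max ordering; in particular a Min-Max ordering exists. -/
theorem stmt_3 {V : Type} [Fintype V] (A : V → V → Prop)
    (hirr : ∀ v, ¬ A v v)
    (hloc_out : ∀ x y z : V, y ≠ z → A x y → A x z → (A y z ∨ A z y))
    (hloc_in : ∀ x y z : V, y ≠ z → A y x → A z x → (A y z ∨ A z y))
    (hconn : ∀ x y : V, Relation.ReflTransGen (fun u w => A u w ∨ A w u) x y)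
    (hacyc : ∀ x y : V, A x y → ¬ Relation.ReflTransGen A y x) :
    (∃! e : Fin (Fintype.card V) ≃ V,
       (∀ i j : Fin (Fintype.card V), i < j → ¬ A (e j) (e i)) ∧
       (∀ i j : Fin (Fintype.card V), (i : ℕ) + 1 = (j : ℕ) → A (e i) (e j))) ∧
    (∀ e : Fin (Fintype.card V) ≃ V,
       ((∀ i j : Fin (Fintype.card V), i < j → ¬ A (e j) (e i)) ∧
        (∀ i j : Fin (Fintype.card V), (i : ℕ) + 1 = (j : ℕ) → A (e i) (e j))) →
       ∀ i j s r : Fin (Fintype.card V), i < j → s < r →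
         A (e i) (e r) → A (e j) (e s) → A (e i) (e s) ∧ A (e j) (e r)) :=
  stmt_3_general A hloc_out hloc_in hconn hacyc
end

section
/- Let H be a connected acyclic locally semicomplete digraph, and let v_1, v_2, …, v_p be the ordering of its vertices such that there is no arc v_j→v_i with j > i and v_i→v_{i+1} for every i < p. If v_i→v_r with i < r, then v_j→v_r for every j with i ≤ j < r. -/
/-- In a connected acyclic locally semicomplete digraph, with the ordering
`v_1, …, v_p` having no backward arcs and `v_i → v_{i+1}` for all `i < p`: if `v_i → v_r`
with `i < r`, then `v_j → v_r` for every `j` with `i ≤ j < r`. -/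
theorem stmt_4 {V : Type} [Fintype V] (A : V → V → Prop)
    (hirr : ∀ v, ¬ A v v)
    (hloc_out : ∀ x y z : V, y ≠ z → A x y → A x z → (A y z ∨ A z y))
    (hloc_in : ∀ x y z : V, y ≠ z → A y x → A z x → (A y z ∨ A z y))
    (hconn : ∀ x y : V, Relation.ReflTransGen (fun u w => A u w ∨ A w u) x y)
    (hacyc : ∀ x y : V, A x y → ¬ Relation.ReflTransGen A y x)
    (e : Fin (Fintype.card V) ≃ V)
    (hback : ∀ i j : Fin (Fintype.card V), i < j → ¬ A (e j) (e i))
    (hsucc : ∀ i j : Fin (Fintype.card V), (i : ℕ) + 1 = (j : ℕ) → A (e i) (e j)) :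
    ∀ i r j : Fin (Fintype.card V), i < r → A (e i) (e r) → i ≤ j → j < r →
      A (e j) (e r) := by
  intro i r j hir hA hij hjr
  have key : ∀ n : ℕ, ∀ j : Fin (Fintype.card V), (j : ℕ) = (i : ℕ) + n → j < r →
      A (e j) (e r) := by
    intro n
    induction n with
    | zero =>
      intro j hj _
      have : j = i := Fin.ext (by omega)
      subst this; exact hA
    | succ n ih =>
      intro j hj hjr
      have hlt : (i : ℕ) + n < Fintype.card V := by
        have := j.isLt; omega
      set j' : Fin (Fintype.card V) := ⟨(i : ℕ) + n, hlt⟩ with hj'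
      have hj'r : j' < r := by
        have : (j' : ℕ) < (j : ℕ) := by simp [hj']; omega
        exact lt_trans (by exact this) hjr
      have hA' : A (e j') (e r) := ih j' rfl hj'r
      have hsuc : A (e j') (e j) := hsucc j' j (by simp [hj']; omega)
      have hne : e j ≠ e r := by
        intro h
        exact absurd (e.injective h) (Fin.ne_of_lt hjr)
      rcases hloc_out (e j') (e j) (e r) hne hsuc hA' with h | h
      · exact h
      · exact absurd h (hback j r hjr)
  exact key ((j : ℕ) - (i : ℕ)) j (by omega) hjr
end

section
/- A finite bipartite graph G, with a fixed bipartition into white and black vertices, is a proper interval bigraph if and only if G admits a bipartite Min-Max ordering. -/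
/-!
Ordering each colour class by left endpoints gives a Min-Max ordering: in an inclusion-free
family the right endpoints come in the same order, and two intervals meet iff each starts before
the other ends.

Conversely, in a Min-Max ordering `f, g` the neighbourhood of a non-isolated white vertex `i`
consists of the non-isolated black vertices `w` with `nbrMin i ≤ g w ≤ nbrMax i`, and both
`nbrMin` and `nbrMax` grow along `f`. So black `w` gets `[g w, g w + 1]` and white `i` gets
`[nbrMin i + θ, nbrMax i + θ]`, where the shift `θ = tieBreak (f i) ∈ (0, 1)` increases
strictly along `f` and makes the white intervals pairwise strictly comparable. Isolated
vertices become distinct points on the negative axis, whites at odd and blacks at even integers.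
-/

open Set Function

section Intervals

variable {ι W B α : Type*} [LinearOrder α]

def InclusionFree (a b : ι → α) : Prop :=
  ∀ i j, ¬ Icc (a i) (b i) ⊂ Icc (a j) (b j)

def IsProperIntervalModel (E : W → B → Prop) (a b : W → α) (c d : B → α) : Prop :=
  (∀ v, a v ≤ b v) ∧ (∀ w, c w ≤ d w) ∧ InclusionFree a b ∧ InclusionFree c d ∧
    ∀ v w, E v w ↔ (Icc (a v) (b v) ∩ Icc (c w) (d w)).Nonempty

def Precedes (a b : ι → α) (i j : ι) : Prop :=
  a i < a j ∧ b i < b j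

theorem Icc_inter_Icc_nonempty_iff {a b c d : α} (hab : a ≤ b) (hcd : c ≤ d) :
    (Icc a b ∩ Icc c d).Nonempty ↔ a ≤ d ∧ c ≤ b := by
  rw [Icc_inter_Icc, nonempty_Icc, sup_le_iff, le_inf_iff, le_inf_iff]
  tauto

theorem InclusionFree.right_le_right {a b : ι → α} (h : InclusionFree a b)
    (hab : ∀ i, a i ≤ b i) {i j : ι} (hij : a i ≤ a j) : b i ≤ b j :=
  not_lt.mp fun hji => h j i (Icc_ssubset_Icc_right (hab i) hij hji)

theorem InclusionFree.of_pairwise {a b : ι → α} (hab : ∀ i, a i ≤ b i)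
    (h : Pairwise fun i j => Precedes a b i j ∨ Precedes a b j i) :
    InclusionFree a b := by
  intro i j hij
  obtain ⟨hji, hij'⟩ := (Icc_subset_Icc_iff (hab i)).mp hij.subset
  rcases eq_or_ne i j with rfl | hne
  · exact ssubset_irrefl _ hij
  · rcases h hne with h | h
    · exact h.1.not_ge hji
    · exact h.2.not_ge hij'

end Intervals

def IsMinMaxOrdering {W B α β : Type*} [LT α] [LT β] (E : W → B → Prop) (f : W → α)
    (g : B → β) : Prop :=
  ∀ i j s r, f i < f j → g s < g r → E i r → E j s → E i s ∧ E j r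

namespace IsProperIntervalModel

variable {W B α β γ : Type*} [LinearOrder α] [LT β] [LT γ] {E : W → B → Prop}
  {a b : W → α} {c d : B → α}

theorem adj_iff (h : IsProperIntervalModel E a b c d) (v : W) (w : B) :
    E v w ↔ a v ≤ d w ∧ c w ≤ b v := by
  rw [h.2.2.2.2, Icc_inter_Icc_nonempty_iff (h.1 v) (h.2.1 w)]

theorem isMinMaxOrdering {f : W → β} {g : B → γ} (h : IsProperIntervalModel E a b c d)
    (hf : ∀ i j, f i < f j → a i ≤ a j) (hg : ∀ s r, g s < g r → c s ≤ c r) :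
    IsMinMaxOrdering E f g := by
  intro i j s r hij hsr hir hjs
  rw [h.adj_iff] at hir hjs
  rw [h.adj_iff, h.adj_iff]
  obtain ⟨hab, hcd, hW, hB, -⟩ := h
  have ha := hf i j hij
  have hc := hg s r hsr
  exact ⟨⟨ha.trans hjs.1, hc.trans hir.2⟩,
    ⟨hjs.1.trans (hB.right_le_right hcd hc), hir.2.trans (hW.right_le_right hab ha)⟩⟩

end IsProperIntervalModel

theorem exists_injective_nat_lt_imp_le {α L : Type*} [Finite α] [LinearOrder L] (k : α → L) :
    ∃ f : α → ℕ, Injective f ∧ ∀ i j, f i < f j → k i ≤ k j := by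
  obtain ⟨e, he⟩ := exists_injective_nat α
  let key : α → L ×ₗ ℕ := fun v => toLex (k v, e v)
  have hkey : Injective key := fun u v huv => he (congrArg (fun x => (ofLex x).2) huv)
  let _ : LinearOrder α := LinearOrder.lift' key hkey
  obtain ⟨φ⟩ := nonempty_orderEmbedding_of_finite_infinite α ℕ
  exact ⟨φ, φ.injective, fun i j hij => Prod.Lex.monotone_fst _ _ (φ.lt_iff_lt.mp hij).le⟩

section MinMax

variable {W B : Type*} {E : W → B → Prop} {f : W → ℕ} {g : B → ℕ}

theorem IsMinMaxOrdering.adj_of_le_of_le (h : IsMinMaxOrdering E f g) (hf : Injective f)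
    (hg : Injective g) {i k : W} {w w₁ w₂ : B} (hk : E k w) (h₁ : E i w₁) (h₂ : E i w₂)
    (hw₁ : g w₁ ≤ g w) (hw₂ : g w ≤ g w₂) : E i w := by
  rcases lt_trichotomy (f k) (f i) with hki | hki | hik
  · rcases hw₁.lt_or_eq with hw₁ | hw₁
    · exact (h k i w₁ w hki hw₁ hk h₁).2
    · exact hg hw₁ ▸ h₁
  · exact hf hki ▸ hk
  · rcases hw₂.lt_or_eq with hw₂ | hw₂
    · exact (h i k w w₂ hik hw₂ h₂ hk).1
    · exact hg hw₂ ▸ h₂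

variable (E g) in
noncomputable def nbrMin (i : W) : ℕ := sInf (g '' {w | E i w})

variable (E g) in
noncomputable def nbrMax (i : W) : ℕ := sSup (g '' {w | E i w})

theorem nbrMin_le {i : W} {w : B} (h : E i w) : nbrMin E g i ≤ g w :=
  Nat.sInf_le ⟨w, h, rfl⟩

theorem exists_adj_eq_nbrMin {i : W} {w : B} (h : E i w) : ∃ w', E i w' ∧ g w' = nbrMin E g i :=
  Nat.sInf_mem (⟨g w, w, h, rfl⟩ : (g '' {w | E i w}).Nonempty)

variable [Finite B]

theorem le_nbrMax {i : W} {w : B} (h : E i w) : g w ≤ nbrMax E g i :=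
  le_csSup (toFinite _).bddAbove ⟨w, h, rfl⟩

theorem exists_adj_eq_nbrMax {i : W} {w : B} (h : E i w) : ∃ w', E i w' ∧ g w' = nbrMax E g i :=
  Nat.sSup_mem (⟨g w, w, h, rfl⟩ : (g '' {w | E i w}).Nonempty) (toFinite _).bddAbove

namespace IsMinMaxOrdering

theorem adj_iff_nbrMin_le_le (h : IsMinMaxOrdering E f g) (hf : Injective f)
    (hg : Injective g) {i : W} {w : B} (hi : ∃ w, E i w) (hw : ∃ k, E k w) :
    E i w ↔ nbrMin E g i ≤ g w ∧ g w ≤ nbrMax E g i := by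
  obtain ⟨w₀, hw₀⟩ := hi
  obtain ⟨k, hk⟩ := hw
  obtain ⟨w₁, h₁, hgw₁⟩ := exists_adj_eq_nbrMin (g := g) hw₀
  obtain ⟨w₂, h₂, hgw₂⟩ := exists_adj_eq_nbrMax (g := g) hw₀
  refine ⟨fun hiw => ⟨nbrMin_le hiw, le_nbrMax hiw⟩, fun ⟨hmin, hmax⟩ => ?_⟩
  exact h.adj_of_le_of_le hf hg hk h₁ h₂ (hgw₁ ▸ hmin) (hgw₂ ▸ hmax)

theorem nbrMin_le_nbrMin_and_nbrMax_le_nbrMax (h : IsMinMaxOrdering E f g) {i j : W}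
    (hij : f i < f j) (hi : ∃ w, E i w) (hj : ∃ w, E j w) :
    nbrMin E g i ≤ nbrMin E g j ∧ nbrMax E g i ≤ nbrMax E g j := by
  obtain ⟨r, hir, hgr⟩ := exists_adj_eq_nbrMax (g := g) hi.choose_spec
  obtain ⟨s, hjs, hgs⟩ := exists_adj_eq_nbrMin (g := g) hj.choose_spec
  rcases lt_or_ge (g s) (g r) with hsr | hrs
  · obtain ⟨his, hjr⟩ := h i j s r hij hsr hir hjs
    exact ⟨hgs ▸ nbrMin_le his, hgr ▸ le_nbrMax hjr⟩
  · exact ⟨(nbrMin_le hir).trans (hgs ▸ hrs), hgr ▸ hrs.trans (le_nbrMax hjs)⟩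

end IsMinMaxOrdering

end MinMax

noncomputable def tieBreak (n : ℕ) : ℝ := 1 - 1 / (n + 2)

theorem tieBreak_pos (n : ℕ) : 0 < tieBreak n := by
  have : 1 / ((n : ℝ) + 2) < 1 := by
    rw [div_lt_one (by positivity)]
    linarith [n.cast_nonneg (α := ℝ)]
  unfold tieBreak
  linarith

theorem tieBreak_lt_one (n : ℕ) : tieBreak n < 1 := by
  unfold tieBreak
  linarith [show 0 < 1 / ((n : ℝ) + 2) by positivity]

theorem tieBreak_strictMono : StrictMono tieBreak := fun m n hmn => by
  unfold tieBreak
  gcongr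

theorem natCast_add_le_natCast_add_one_iff {m k : ℕ} {t : ℝ} (ht₀ : 0 < t) (ht₁ : t ≤ 1) :
    (m : ℝ) + t ≤ k + 1 ↔ m ≤ k := by
  constructor
  · intro h
    have : (m : ℝ) < k + 1 := by linarith
    exact Nat.lt_succ_iff.mp (by exact_mod_cast this)
  · intro h
    have : (m : ℝ) ≤ k := by exact_mod_cast h
    linarith

theorem natCast_le_natCast_add_iff {k n : ℕ} {t : ℝ} (ht₀ : 0 ≤ t) (ht₁ : t < 1) :
    (k : ℝ) ≤ n + t ↔ k ≤ n := by
  constructor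
  · intro h
    have : (k : ℝ) < n + 1 := by linarith
    exact Nat.lt_succ_iff.mp (by exact_mod_cast this)
  · intro h
    have : (k : ℝ) ≤ n := by exact_mod_cast h
    linarith

section Construction

variable {W B : Type*} (E : W → B → Prop) (f : W → ℕ) (g : B → ℕ)

open Classical in
noncomputable def whiteLeft (i : W) : ℝ :=
  if ∃ w, E i w then nbrMin E g i + tieBreak (f i) else -(2 * f i + 1)

open Classical in
noncomputable def whiteRight (i : W) : ℝ :=
  if ∃ w, E i w then nbrMax E g i + tieBreak (f i) else -(2 * f i + 1)

open Classical in
noncomputable def blackLeft (w : B) : ℝ :=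
  if ∃ i, E i w then g w else -(2 * g w + 2)

open Classical in
noncomputable def blackRight (w : B) : ℝ :=
  if ∃ i, E i w then g w + 1 else -(2 * g w + 2)

variable {E f g}

theorem whiteLeft_pos {i : W} (hi : ∃ w, E i w) : 0 < whiteLeft E f g i := by
  rw [whiteLeft, if_pos hi]
  linarith [tieBreak_pos (f i), (nbrMin E g i).cast_nonneg (α := ℝ)]

theorem whiteRight_neg {i : W} (hi : ¬∃ w, E i w) : whiteRight E f g i < 0 := by
  rw [whiteRight, if_neg hi]
  linarith [(f i).cast_nonneg (α := ℝ)]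

theorem whiteLeft_eq_whiteRight {i : W} (hi : ¬∃ w, E i w) :
    whiteLeft E f g i = whiteRight E f g i := by
  rw [whiteLeft, whiteRight, if_neg hi, if_neg hi]

theorem blackLeft_nonneg {w : B} (hw : ∃ i, E i w) : 0 ≤ blackLeft E g w := by
  rw [blackLeft, if_pos hw]
  exact (g w).cast_nonneg

theorem blackRight_neg {w : B} (hw : ¬∃ i, E i w) : blackRight E g w < 0 := by
  rw [blackRight, if_neg hw]
  linarith [(g w).cast_nonneg (α := ℝ)]

theorem blackLeft_eq_blackRight {w : B} (hw : ¬∃ i, E i w) :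
    blackLeft E g w = blackRight E g w := by
  rw [blackLeft, blackRight, if_neg hw, if_neg hw]

theorem whiteLeft_ne_blackLeft {i : W} {w : B} (hi : ¬∃ w, E i w) (hw : ¬∃ i, E i w) :
    whiteLeft E f g i ≠ blackLeft E g w := by
  rw [whiteLeft, blackLeft, if_neg hi, if_neg hw]
  intro h
  have : 2 * f i + 1 = 2 * g w + 2 := by
    exact_mod_cast (by linarith : (2 * f i + 1 : ℝ) = 2 * g w + 2)
  omega

theorem blackLeft_le_blackRight (w : B) : blackLeft E g w ≤ blackRight E g w := by
  by_cases hw : ∃ i, E i w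
  · rw [blackLeft, blackRight, if_pos hw, if_pos hw]
    linarith
  · exact (blackLeft_eq_blackRight hw).le

theorem precedes_black_of_lt {s r : B} (hs : ∃ i, E i s) (hr : ∃ i, E i r) (hsr : g s < g r) :
    Precedes (blackLeft E g) (blackRight E g) s r := by
  have : (g s : ℝ) < g r := by exact_mod_cast hsr
  rw [Precedes, blackLeft, blackLeft, blackRight, blackRight, if_pos hs, if_pos hr, if_pos hs,
    if_pos hr]
  constructor <;> linarith

theorem precedes_black_of_isolated {s r : B} (hs : ¬∃ i, E i s) (hr : ∃ i, E i r) :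
    Precedes (blackLeft E g) (blackRight E g) s r := by
  have := blackLeft_le_blackRight (E := E) (g := g) r
  have := blackLeft_eq_blackRight (g := g) hs
  constructor <;> linarith [blackRight_neg (g := g) hs, blackLeft_nonneg (g := g) hr]

theorem precedes_black_of_isolated_of_lt {s r : B} (hs : ¬∃ i, E i s) (hr : ¬∃ i, E i r)
    (hrs : g r < g s) : Precedes (blackLeft E g) (blackRight E g) s r := by
  have : (g r : ℝ) < g s := by exact_mod_cast hrs
  rw [Precedes, blackLeft, blackLeft, blackRight, blackRight, if_neg hs, if_neg hr, if_neg hs,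
    if_neg hr]
  constructor <;> linarith

theorem pairwise_precedes_black (hg : Injective g) :
    Pairwise fun s r => Precedes (blackLeft E g) (blackRight E g) s r ∨
      Precedes (blackLeft E g) (blackRight E g) r s := by
  intro s r hne
  by_cases hs : ∃ i, E i s <;> by_cases hr : ∃ i, E i r
  · rcases (hg.ne hne).lt_or_gt with hsr | hrs
    · exact .inl (precedes_black_of_lt hs hr hsr)
    · exact .inr (precedes_black_of_lt hr hs hrs)
  · exact .inr (precedes_black_of_isolated hr hs)
  · exact .inl (precedes_black_of_isolated hs hr)
  · rcases (hg.ne hne).lt_or_gt with hsr | hrs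
    · exact .inr (precedes_black_of_isolated_of_lt hr hs hsr)
    · exact .inl (precedes_black_of_isolated_of_lt hs hr hrs)

theorem precedes_white_of_isolated_of_lt {i j : W} (hi : ¬∃ w, E i w) (hj : ¬∃ w, E j w)
    (hji : f j < f i) : Precedes (whiteLeft E f g) (whiteRight E f g) i j := by
  have : (f j : ℝ) < f i := by exact_mod_cast hji
  rw [Precedes, whiteLeft, whiteLeft, whiteRight, whiteRight, if_neg hi, if_neg hj, if_neg hi,
    if_neg hj]
  constructor <;> linarith

variable [Finite B]

theorem whiteLeft_le_whiteRight (i : W) : whiteLeft E f g i ≤ whiteRight E f g i := by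
  by_cases hi : ∃ w, E i w
  · rw [whiteLeft, whiteRight, if_pos hi, if_pos hi]
    obtain ⟨w, hw⟩ := hi
    have : (nbrMin E g i : ℝ) ≤ nbrMax E g i := by
      exact_mod_cast (nbrMin_le hw).trans (le_nbrMax hw)
    linarith
  · exact (whiteLeft_eq_whiteRight hi).le

theorem precedes_white_of_isolated {i j : W} (hi : ¬∃ w, E i w) (hj : ∃ w, E j w) :
    Precedes (whiteLeft E f g) (whiteRight E f g) i j := by
  have := whiteLeft_le_whiteRight (E := E) (f := f) (g := g) j
  have := whiteLeft_eq_whiteRight (f := f) (g := g) hi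
  constructor <;>
    linarith [whiteRight_neg (f := f) (g := g) hi, whiteLeft_pos (f := f) (g := g) hj]

namespace IsMinMaxOrdering

variable (h : IsMinMaxOrdering E f g)
include h

theorem precedes_white_of_lt {i j : W} (hi : ∃ w, E i w) (hj : ∃ w, E j w) (hij : f i < f j) :
    Precedes (whiteLeft E f g) (whiteRight E f g) i j := by
  obtain ⟨hmin, hmax⟩ := h.nbrMin_le_nbrMin_and_nbrMax_le_nbrMax hij hi hj
  have hθ := tieBreak_strictMono hij
  rw [Precedes, whiteLeft, whiteLeft, whiteRight, whiteRight, if_pos hi, if_pos hi, if_pos hj,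
    if_pos hj]
  constructor
  · linarith [(Nat.cast_le (α := ℝ)).mpr hmin]
  · linarith [(Nat.cast_le (α := ℝ)).mpr hmax]

theorem pairwise_precedes_white (hf : Injective f) :
    Pairwise fun i j => Precedes (whiteLeft E f g) (whiteRight E f g) i j ∨
      Precedes (whiteLeft E f g) (whiteRight E f g) j i := by
  intro i j hne
  by_cases hi : ∃ w, E i w <;> by_cases hj : ∃ w, E j w
  · rcases (hf.ne hne).lt_or_gt with hij | hji
    · exact .inl (h.precedes_white_of_lt hi hj hij)
    · exact .inr (h.precedes_white_of_lt hj hi hji)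
  · exact .inr (precedes_white_of_isolated hj hi)
  · exact .inl (precedes_white_of_isolated hi hj)
  · rcases (hf.ne hne).lt_or_gt with hij | hji
    · exact .inr (precedes_white_of_isolated_of_lt hj hi hij)
    · exact .inl (precedes_white_of_isolated_of_lt hi hj hji)

theorem adj_iff_whiteLeft_le_and_blackLeft_le (hf : Injective f) (hg : Injective g)
    (v : W) (w : B) :
    E v w ↔
      whiteLeft E f g v ≤ blackRight E g w ∧ blackLeft E g w ≤ whiteRight E f g v := by
  by_cases hv : ∃ w, E v w <;> by_cases hw : ∃ i, E i w
  · rw [h.adj_iff_nbrMin_le_le hf hg hv hw, whiteLeft, whiteRight, blackLeft, blackRight,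
      if_pos hv, if_pos hv, if_pos hw, if_pos hw,
      natCast_add_le_natCast_add_one_iff (tieBreak_pos _) (tieBreak_lt_one _).le,
      natCast_le_natCast_add_iff (tieBreak_pos _).le (tieBreak_lt_one _)]
  · refine iff_of_false (fun hvw => hw ⟨v, hvw⟩) fun ⟨hvw, _⟩ => ?_
    linarith [blackRight_neg (g := g) hw, whiteLeft_pos (f := f) (g := g) hv]
  · refine iff_of_false (fun hvw => hv ⟨w, hvw⟩) fun ⟨_, hwv⟩ => ?_
    linarith [whiteRight_neg (f := f) (g := g) hv, blackLeft_nonneg (g := g) hw]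
  · refine iff_of_false (fun hvw => hv ⟨w, hvw⟩) fun ⟨hvw, hwv⟩ => ?_
    have := whiteLeft_eq_whiteRight (f := f) (g := g) hv
    have := blackLeft_eq_blackRight (g := g) hw
    exact whiteLeft_ne_blackLeft hv hw (by linarith)

theorem isProperIntervalModel (hf : Injective f) (hg : Injective g) :
    IsProperIntervalModel E (whiteLeft E f g) (whiteRight E f g) (blackLeft E g)
      (blackRight E g) :=
  ⟨whiteLeft_le_whiteRight, blackLeft_le_blackRight,
    .of_pairwise whiteLeft_le_whiteRight (h.pairwise_precedes_white hf),
    .of_pairwise blackLeft_le_blackRight (pairwise_precedes_black hg),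
    fun v w => by
      rw [Icc_inter_Icc_nonempty_iff (whiteLeft_le_whiteRight v) (blackLeft_le_blackRight w)]
      exact h.adj_iff_whiteLeft_le_and_blackLeft_le hf hg v w⟩

end IsMinMaxOrdering

end Construction

/-- A finite bipartite graph (white part `W`, black part `B`, edge relation
`E`) is a proper interval bigraph iff it admits a bipartite Min-Max ordering. -/
theorem stmt_5 {W B : Type} [Fintype W] [Fintype B] (E : W → B → Prop) :
    (∃ (a b : W → ℝ) (c d : B → ℝ),
       (∀ v, a v ≤ b v) ∧ (∀ w, c w ≤ d w) ∧
       (∀ v v' : W, ¬ Set.Icc (a v) (b v) ⊂ Set.Icc (a v') (b v')) ∧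
       (∀ w w' : B, ¬ Set.Icc (c w) (d w) ⊂ Set.Icc (c w') (d w')) ∧
       (∀ v w, E v w ↔ (Set.Icc (a v) (b v) ∩ Set.Icc (c w) (d w)).Nonempty)) ↔
    (∃ (f : W → ℕ) (g : B → ℕ), Function.Injective f ∧ Function.Injective g ∧
       ∀ i j s r, f i < f j → g s < g r → E i r → E j s → E i s ∧ E j r) := by
  constructor
  · rintro ⟨a, b, c, d, hmodel⟩
    obtain ⟨f, hf, hfa⟩ := exists_injective_nat_lt_imp_le a
    obtain ⟨g, hg, hgc⟩ := exists_injective_nat_lt_imp_le c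
    exact ⟨f, g, hf, hg, IsProperIntervalModel.isMinMaxOrdering hmodel hfa hgc⟩
  · rintro ⟨f, g, hf, hg, hminmax⟩
    exact ⟨_, _, _, _, IsMinMaxOrdering.isProperIntervalModel hminmax hf hg⟩
end

section
/- Let T be a finite loopless digraph and let < be a bipartite Min-Max ordering of B(T) that is proper, i.e., for every pair of distinct vertices x, y of T, x' < y' holds if and only if x'' < y''. Then the relation ≺ on the vertices of T defined by x ≺ y iff x' < y' is a linear ordering of V(T) and is a Min-Max ordering of T. -/
theorem stmt_8_general {V : Type} (A : V → V → Prop)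
    (f g : V → ℕ) (hf : Function.Injective f)
    (hmm : ∀ i j s r : V, f i < f j → g s < g r → A i r → A j s → A i s ∧ A j r)
    (hproper : ∀ x y : V, x ≠ y → (f x < f y ↔ g x < g y)) :
    IsStrictTotalOrder V (fun x y => f x < f y) ∧
    (∀ i j s r : V, f i < f j → f s < f r → A i r → A j s → A i s ∧ A j r) :=
  ⟨hf.isStrictTotalOrder_onFun (· < ·), fun i j s r hij hsr =>
    hmm i j s r hij ((hproper s r (ne_of_apply_ne f hsr.ne)).mp hsr)⟩

/-- If `(f, g)` is a proper bipartite Min-Max ordering of `B(T)`, then the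
relation `x ≺ y ↔ f x < f y` is a strict linear (total) order on `V(T)` and is a Min-Max
ordering of `T`. -/
theorem stmt_8 {V : Type} [Fintype V] (A : V → V → Prop)
    (hirr : ∀ v, ¬ A v v)
    (f g : V → ℕ) (hf : Function.Injective f) (hg : Function.Injective g)
    (hmm : ∀ i j s r : V, f i < f j → g s < g r → A i r → A j s → A i s ∧ A j r)
    (hproper : ∀ x y : V, x ≠ y → (f x < f y ↔ g x < g y)) :
    IsStrictTotalOrder V (fun x y => f x < f y) ∧
    (∀ i j s r : V, f i < f j → f s < f r → A i r → A j s → A i s ∧ A j r) :=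
  stmt_8_general A f g hf hmm hproper
end

section
/- Let T be a finite loopless digraph, let < be a bipartite Min-Max ordering of B(T), and let x, y be vertices of T such that x' < y' and no white vertex lies strictly between x' and y' in the white ordering. Suppose that for every pair of vertices c, d of T with d'' < c'' such that x'd'' and y'c'' are edges of B(T), both x'c'' and y'd'' are edges of B(T). Then the ordering obtained from < by exchanging the positions of x' and y' in the white ordering (keeping all other positions and the black ordering unchanged) is again a bipartite Min-Max ordering of B(T); moreover, if y'' < x'', the number of proper pairs strictly increases after the exchange. -/
/-- Exchanging the positions of two consecutive white vertices `x'`, `y'`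
(with `x' < y'`) in a bipartite Min-Max ordering of `B(T)`, provided that for all black
vertices `d'' < c''` with `x'd''` and `y'c''` edges also `x'c''` and `y'd''` are edges,
yields again a bipartite Min-Max ordering; and if `y'' < x''`, the number of proper
pairs strictly increases. -/
theorem stmt_9 {V : Type} [Fintype V] [DecidableEq V] (A : V → V → Prop)
    (hirr : ∀ v, ¬ A v v)
    (f g : V → ℕ) (hf : Function.Injective f) (hg : Function.Injective g)
    (hmm : ∀ i j s r : V, f i < f j → g s < g r → A i r → A j s → A i s ∧ A j r)
    (x y : V) (hxy : f x < f y)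
    (hbetween : ∀ w : V, ¬ (f x < f w ∧ f w < f y))
    (hcd : ∀ c d : V, g d < g c → A x d → A y c → A x c ∧ A y d) :
    (Function.Injective (fun v => if v = x then f y else if v = y then f x else f v) ∧
     (∀ i j s r : V,
        (if i = x then f y else if i = y then f x else f i) <
          (if j = x then f y else if j = y then f x else f j) →
        g s < g r → A i r → A j s → A i s ∧ A j r)) ∧
    (g y < g x →
      (Finset.univ.filter fun p : V × V => p.1 ≠ p.2 ∧
          ((if p.1 = x then f y else if p.1 = y then f x else f p.1) <
             (if p.2 = x then f y else if p.2 = y then f x else f p.2) ↔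
           g p.1 < g p.2)).card >
      (Finset.univ.filter fun p : V × V => p.1 ≠ p.2 ∧
          (f p.1 < f p.2 ↔ g p.1 < g p.2)).card) := by
  have hxny : x ≠ y := fun h => absurd hxy (by rw [h]; exact lt_irrefl _)
  have hf' : ∀ a : V, (fun v => if v = x then f y else if v = y then f x else f v) a =
      if a = x then f y else if a = y then f x else f a := fun a => rfl
  set f' : V → ℕ := fun v => if v = x then f y else if v = y then f x else f v with hf'def
  have hfa : ∀ a : V, a ≠ x → a ≠ y → f' a = f a := by
    intro a h1 h2; simp [hf', h1, h2]
  have hfx : f' x = f y := by simp [hf']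
  have hfy : f' y = f x := by simp [hf', hxny.symm]
  have key : ∀ a : V, a ≠ x → a ≠ y →
      ((f a < f x ↔ f a < f y) ∧ (f x < f a ↔ f y < f a)) := by
    intro a hax hay
    have h1 := hbetween a
    have h2 : f a ≠ f x := fun h => hax (hf h)
    have h3 : f a ≠ f y := fun h => hay (hf h)
    omega
  have swap_iff : ∀ a b : V, ¬(a = y ∧ b = x) → ¬(a = x ∧ b = y) →
      (f' a < f' b ↔ f a < f b) := by
    intro a b h1 h2
    rcases eq_or_ne a x with hax | hax
    · rcases eq_or_ne b y with hby | hby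
      · exact absurd ⟨hax, hby⟩ h2
      rcases eq_or_ne b x with hbx | hbx
      · rw [hax, hbx]; simp
      · obtain ⟨k1, k2⟩ := key b hbx hby
        rw [hax, hfx, hfa b hbx hby]; omega
    rcases eq_or_ne a y with hay | hay
    · rcases eq_or_ne b x with hbx | hbx
      · exact absurd ⟨hay, hbx⟩ h1
      rcases eq_or_ne b y with hby | hby
      · rw [hay, hby]; simp
      · obtain ⟨k1, k2⟩ := key b hbx hby
        rw [hay, hfy, hfa b hbx hby]; omega
    rcases eq_or_ne b x with hbx | hbx
    · obtain ⟨k1, k2⟩ := key a hax hay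
      rw [hbx, hfx, hfa a hax hay]; omega
    rcases eq_or_ne b y with hby | hby
    · obtain ⟨k1, k2⟩ := key a hax hay
      rw [hby, hfy, hfa a hax hay]; omega
    · rw [hfa a hax hay, hfa b hbx hby]
  refine ⟨⟨?_, ?_⟩, ?_⟩
  · -- injectivity
    have hcomp : f' = f ∘ (Equiv.swap x y) := by
      funext v
      rcases eq_or_ne v x with rfl | hvx
      · simp [hf', Equiv.swap_apply_left]
      rcases eq_or_ne v y with rfl | hvy
      · simp [hf', Equiv.swap_apply_right, hxny.symm]
      · simp [hf', hvx, hvy, Equiv.swap_apply_of_ne_of_ne hvx hvy]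
    rw [hcomp]
    exact hf.comp (Equiv.swap x y).injective
  · -- Min-Max property
    intro i j s r hij hsr hir hjs
    have hij' : f' i < f' j := hij
    by_cases h1 : i = y ∧ j = x
    · obtain ⟨rfl, rfl⟩ := h1
      have := hcd r s hsr hjs hir
      exact ⟨this.2, this.1⟩
    by_cases h2 : i = x ∧ j = y
    · obtain ⟨rfl, rfl⟩ := h2
      rw [hfx, hfy] at hij'
      omega
    · exact hmm i j s r ((swap_iff i j h1 h2).mp hij') hsr hir hjs
  · -- counting
    intro hgyx
    have hgne : g x ≠ g y := fun h => hxny (hg h)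
    apply Finset.card_lt_card
    have hsub : (Finset.univ.filter fun p : V × V => p.1 ≠ p.2 ∧
          (f p.1 < f p.2 ↔ g p.1 < g p.2)) ⊆
        (Finset.univ.filter fun p : V × V => p.1 ≠ p.2 ∧
          ((if p.1 = x then f y else if p.1 = y then f x else f p.1) <
             (if p.2 = x then f y else if p.2 = y then f x else f p.2) ↔
           g p.1 < g p.2)) := by
      intro p hp
      simp only [Finset.mem_filter, Finset.mem_univ, true_and] at hp ⊢
      obtain ⟨hne, hiff⟩ := hp
      refine ⟨hne, ?_⟩
      show f' p.1 < f' p.2 ↔ g p.1 < g p.2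
      by_cases h1 : p.1 = y ∧ p.2 = x
      · obtain ⟨e1, e2⟩ := h1
        rw [e1, e2] at hiff ⊢
        rw [hfy, hfx]
        omega
      by_cases h2 : p.1 = x ∧ p.2 = y
      · obtain ⟨e1, e2⟩ := h2
        rw [e1, e2] at hiff
        omega
      · rw [swap_iff p.1 p.2 h1 h2]
        exact hiff
    rw [Finset.ssubset_iff_of_subset hsub]
    refine ⟨(x, y), ?_, ?_⟩
    · rw [Finset.mem_filter]
      refine ⟨Finset.mem_univ _, hxny, ?_⟩
      show f' x < f' y ↔ g x < g y
      rw [hfx, hfy]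
      omega
    · simp only [Finset.mem_filter, Finset.mem_univ, true_and, not_and]
      intro _
      omega
end

section
/- Let T be a finite transitive oriented graph and let < be a bipartite Min-Max ordering of B(T). Suppose there are vertices a, b, x, y, c, d of T such that x' < y' < b' < a' in the white ordering, d'' < c'' < y'' < x'' in the black ordering, the edges x'd'', y'c'', b'y'', a'x'' all belong to B(T), at least one of y'd'' and x'c'' is not an edge of B(T), and at least one of b'x'' and a'y'' is not an edge of B(T). Then a, b, x, y, c, d are six distinct vertices of T and the subdigraph of T induced by {a, b, x, y, c, d} is isomorphic to O_i for some i ∈ {1,2,3,4}. -/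
/-- Common arc set of the obstructions `O_1, …, O_4`, on vertex set `Fin 6`
(vertex `i+1` of the paper is `i : Fin 6` here): arcs 13,14,15,16,24,25,26,36,45,46. -/
def Obase : Fin 6 → Fin 6 → Prop := fun u v =>
  (u, v) ∈ ([(0, 2), (0, 3), (0, 4), (0, 5), (1, 3), (1, 4), (1, 5), (2, 5), (3, 4), (3, 5)] :
    List (Fin 6 × Fin 6))

/-- Arc relation of `O_{i+1}` for `i : Fin 4`:
`S_1 = ∅`, `S_2 = {12}`, `S_3 = {56}`, `S_4 = {12, 56}`. -/
def Oarc : Fin 4 → Fin 6 → Fin 6 → Prop := fun i u v =>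
  Obase u v ∨ ((i = 1 ∨ i = 3) ∧ (u, v) = (0, 1)) ∨ ((i = 2 ∨ i = 3) ∧ (u, v) = (4, 5))

set_option maxHeartbeats 1600000 in
/-- In a transitive oriented graph `T` with a bipartite Min-Max ordering
`(f, g)` of `B(T)`, vertices `a, b, x, y, c, d` with `x' < y' < b' < a'`,
`d'' < c'' < y'' < x''`, edges `x'd'', y'c'', b'y'', a'x''`, at least one of `y'd'', x'c''`
missing and at least one of `b'x'', a'y''` missing, are six distinct vertices inducing a
subdigraph isomorphic to some `O_i`. -/
theorem stmt_10 {V : Type} [Fintype V] (A : V → V → Prop)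
    (hirr : ∀ v, ¬ A v v)
    (hasym : ∀ p q : V, A p q → ¬ A q p)
    (htrans : ∀ p q r : V, A p q → A q r → p ≠ r → A p r)
    (f g : V → ℕ) (hf : Function.Injective f) (hg : Function.Injective g)
    (hmm : ∀ i j s r : V, f i < f j → g s < g r → A i r → A j s → A i s ∧ A j r)
    (a b x y c d : V)
    (hw : f x < f y ∧ f y < f b ∧ f b < f a)
    (hb : g d < g c ∧ g c < g y ∧ g y < g x)
    (e1 : A x d) (e2 : A y c) (e3 : A b y) (e4 : A a x)
    (hn1 : ¬ A y d ∨ ¬ A x c)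
    (hn2 : ¬ A b x ∨ ¬ A a y) :
    ([a, b, x, y, c, d] : List V).Nodup ∧
    ∃ i : Fin 4, ∃ φ : Fin 6 → V, Function.Injective φ ∧
      Set.range φ = ({a, b, x, y, c, d} : Set V) ∧
      ∀ u v : Fin 6, Oarc i u v ↔ A (φ u) (φ v) := by

  classical
  obtain ⟨hw1, hw2, hw3⟩ := hw
  obtain ⟨hb1, hb2, hb3⟩ := hb
  have hfxb : f x < f b := hw1.trans hw2
  have hfxa : f x < f a := hfxb.trans hw3
  have hfya : f y < f a := hw2.trans hw3
  have hgdy : g d < g y := hb1.trans hb2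
  have hgdx : g d < g x := hgdy.trans hb3
  have hgcx : g c < g x := hb2.trans hb3
  have neF : ∀ u v : V, f u < f v → u ≠ v := by
    intro u v h heq; subst heq; exact lt_irrefl _ h
  have neG : ∀ u v : V, g u < g v → u ≠ v := by
    intro u v h heq; subst heq; exact lt_irrefl _ h
  have neA : ∀ u v : V, A u v → u ≠ v := by
    intro u v h heq; subst heq; exact hirr _ h
  -- distinctness derived from arcs/orders
  have nad : a ≠ d := by intro h; subst h; exact hasym a x e4 e1
  have nbc : b ≠ c := by intro h; subst h; exact hasym b y e3 e2
  have had : A a d := htrans a x d e4 e1 nad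
  have hbc : A b c := htrans b y c e3 e2 nbc
  have hbdac := hmm b a d c hw3 hb1 hbc had
  have hbd : A b d := hbdac.1
  have hac : A a c := hbdac.2
  have hyd : A y d := (hmm y b d c hw2 hb1 e2 hbd).1
  have hay : A a y := (hmm b a d y hw3 hgdy e3 had).2
  have nxc : ¬ A x c := hn1.resolve_left (fun h => h hyd)
  have nbx : ¬ A b x := hn2.resolve_right (fun h => h hay)
  have nyx : ¬ A y x := fun h => hirr y (hmm y b y x hw2 hb3 h e3).1
  have nxy : ¬ A x y := fun h => nxc (hmm x a c y hfxa hb2 h hac).1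
  have nxb : ¬ A x b := fun h => nxy (htrans x b y h e3 (neF x y hw1))
  have ncx : ¬ A c x := fun h => nyx (htrans y c x e2 h (neG y x hb3))
  have nba : ¬ A b a := fun h => nbx (htrans b a x h e4 (neF x b hfxb).symm)
  have ndc : ¬ A d c := fun h => nxc (htrans x d c e1 h (neG c x hgcx).symm)
  -- reverse arcs
  have nxa : ¬ A x a := hasym a x e4
  have nya : ¬ A y a := hasym a y hay
  have nca : ¬ A c a := hasym a c hac
  have nda : ¬ A d a := hasym a d had
  have nyb : ¬ A y b := hasym b y e3
  have ncb : ¬ A c b := hasym b c hbc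
  have ndb : ¬ A d b := hasym b d hbd
  have ndx : ¬ A d x := hasym x d e1
  have ncy : ¬ A c y := hasym y c e2
  have ndy : ¬ A d y := hasym y d hyd
  -- all pairwise distinct
  have nab : a ≠ b := (neF b a hw3).symm
  have nax : a ≠ x := (neF x a hfxa).symm
  have nay : a ≠ y := neA a y hay
  have nac : a ≠ c := neA a c hac
  have nbx' : b ≠ x := (neF x b hfxb).symm
  have nby : b ≠ y := (neF y b hw2).symm
  have nbd' : b ≠ d := neA b d hbd
  have nxy' : x ≠ y := neF x y hw1
  have nxc' : x ≠ c := (neG c x hgcx).symm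
  have nxd : x ≠ d := (neG d x hgdx).symm
  have nyc : y ≠ c := (neG c y hb2).symm
  have nyd : y ≠ d := (neG d y hgdy).symm
  have ncd : c ≠ d := (neG d c hb1).symm
  refine ⟨?_, ?_⟩
  · simp only [List.nodup_cons, List.mem_cons, List.mem_singleton, List.not_mem_nil,
      List.nodup_nil, not_or, and_true, not_false_iff]
    exact ⟨⟨nab, nax, nay, nac, nad⟩, ⟨nbx', nby, nbc, nbd'⟩, ⟨nxy', nxc', nxd⟩,
      ⟨nyc, nyd⟩, ncd⟩
  · have hinj : Function.Injective ![a, b, x, y, c, d] := by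
      intro u v h
      fin_cases u <;> fin_cases v <;> simp only [Matrix.cons_val_zero, Matrix.cons_val_one,
        Matrix.head_cons, Matrix.cons_val_two, Matrix.tail_cons, Matrix.cons_val_three,
        Matrix.cons_val_four, Matrix.cons_val_succ] at h <;>
      first
        | rfl
        | exact absurd h nab | exact absurd h.symm nab
        | exact absurd h nax | exact absurd h.symm nax
        | exact absurd h nay | exact absurd h.symm nay
        | exact absurd h nac | exact absurd h.symm nac
        | exact absurd h nad | exact absurd h.symm nad
        | exact absurd h nbx' | exact absurd h.symm nbx'
        | exact absurd h nby | exact absurd h.symm nby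
        | exact absurd h nbc | exact absurd h.symm nbc
        | exact absurd h nbd' | exact absurd h.symm nbd'
        | exact absurd h nxy' | exact absurd h.symm nxy'
        | exact absurd h nxc' | exact absurd h.symm nxc'
        | exact absurd h nxd | exact absurd h.symm nxd
        | exact absurd h nyc | exact absurd h.symm nyc
        | exact absurd h nyd | exact absurd h.symm nyd
        | exact absurd h ncd | exact absurd h.symm ncd
    have hrange : Set.range ![a, b, x, y, c, d] = ({a, b, x, y, c, d} : Set V) := by
      ext v
      constructor
      · rintro ⟨u, rfl⟩
        fin_cases u <;> simp only [Set.mem_insert_iff, Set.mem_singleton_iff] <;>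
          first
            | exact Or.inl rfl
            | exact Or.inr (Or.inl rfl)
            | exact Or.inr (Or.inr (Or.inl rfl))
            | exact Or.inr (Or.inr (Or.inr (Or.inl rfl)))
            | exact Or.inr (Or.inr (Or.inr (Or.inr (Or.inl rfl))))
            | exact Or.inr (Or.inr (Or.inr (Or.inr (Or.inr rfl))))
      · rintro (rfl | rfl | rfl | rfl | rfl | rfl)
        exacts [⟨0, rfl⟩, ⟨1, rfl⟩, ⟨2, rfl⟩, ⟨3, rfl⟩, ⟨4, rfl⟩, ⟨5, rfl⟩]
    by_cases hab : A a b <;> by_cases hcd : A c d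
    · exact ⟨3, ![a, b, x, y, c, d], hinj, hrange, by
        intro u v; fin_cases u <;> fin_cases v <;>
          simp [Oarc, Obase, Prod.ext_iff] <;>
          first
            | exact hirr _
            | assumption
            | exact e1 | exact e2 | exact e3 | exact e4
            | exact had | exact hbc | exact hbd | exact hac | exact hyd | exact hay
            | exact hab | exact hcd
            | exact nxc | exact nbx | exact nyx | exact nxy | exact nxb | exact ncx
            | exact nba | exact ndc | exact nxa | exact nya | exact nca | exact nda
            | exact nyb | exact ncb | exact ndb | exact ndx | exact ncy | exact ndy⟩
    · exact ⟨1, ![a, b, x, y, c, d], hinj, hrange, by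
        intro u v; fin_cases u <;> fin_cases v <;>
          simp [Oarc, Obase, Prod.ext_iff] <;>
          first
            | exact hirr _
            | assumption
            | exact e1 | exact e2 | exact e3 | exact e4
            | exact had | exact hbc | exact hbd | exact hac | exact hyd | exact hay
            | exact hab | exact hcd
            | exact nxc | exact nbx | exact nyx | exact nxy | exact nxb | exact ncx
            | exact nba | exact ndc | exact nxa | exact nya | exact nca | exact nda
            | exact nyb | exact ncb | exact ndb | exact ndx | exact ncy | exact ndy⟩
    · exact ⟨2, ![a, b, x, y, c, d], hinj, hrange, by
        intro u v; fin_cases u <;> fin_cases v <;>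
          simp [Oarc, Obase, Prod.ext_iff] <;>
          first
            | exact hirr _
            | assumption
            | exact e1 | exact e2 | exact e3 | exact e4
            | exact had | exact hbc | exact hbd | exact hac | exact hyd | exact hay
            | exact hab | exact hcd
            | exact nxc | exact nbx | exact nyx | exact nxy | exact nxb | exact ncx
            | exact nba | exact ndc | exact nxa | exact nya | exact nca | exact nda
            | exact nyb | exact ncb | exact ndb | exact ndx | exact ncy | exact ndy⟩
    · exact ⟨0, ![a, b, x, y, c, d], hinj, hrange, by
        intro u v; fin_cases u <;> fin_cases v <;>
          simp [Oarc, Obase, Prod.ext_iff] <;>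
          first
            | exact hirr _
            | assumption
            | exact e1 | exact e2 | exact e3 | exact e4
            | exact had | exact hbc | exact hbd | exact hac | exact hyd | exact hay
            | exact hab | exact hcd
            | exact nxc | exact nbx | exact nyx | exact nxy | exact nxb | exact ncx
            | exact nba | exact ndc | exact nxa | exact nya | exact nca | exact nda
            | exact nyb | exact ncb | exact ndb | exact ndx | exact ncy | exact ndy⟩
end

section
/- For every integer k ≥ 2, every closed directed walk in the digraph H1(k) has length of the form s·k + t·(k+1) for some nonnegative integers s and t. -/
/-- Arc relation of the digraph `H1(k)` on vertices `{1, …, k+1} ⊆ ℕ`: the directed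
cycle `1 → 2 → … → k → 1` together with the arcs `k → k+1` and `k+1 → 1`. -/
def H1Arc (k : ℕ) : ℕ → ℕ → Prop := fun a b =>
  (1 ≤ a ∧ a < k ∧ b = a + 1) ∨ (a = k ∧ b = 1) ∨ (a = k ∧ b = k + 1) ∨ (a = k + 1 ∧ b = 1)

/-- For `k ≥ 2`, every closed directed walk in `H1(k)` has length
`s·k + t·(k+1)` for some nonnegative integers `s, t`. -/
theorem stmt_12 (k : ℕ) (hk : 2 ≤ k) (m : ℕ) (u : ℕ → ℕ)
    (hwalk : ∀ i < m, H1Arc k (u i) (u (i + 1))) (hclosed : u 0 = u m) :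
    ∃ s t : ℕ, m = s * k + t * (k + 1) := by
  classical
  set p1 : ℕ → Prop := fun i => u i = k ∧ u (i + 1) = 1 with hp1
  set p2 : ℕ → Prop := fun i => u i = k + 1 with hp2
  have key : ∀ i ∈ Finset.range m,
      ((u (i + 1) : ℤ) - u i) =
        1 - (if p1 i then (k : ℤ) else 0) - (if p2 i then (k : ℤ) + 1 else 0) := by
    intro i hi
    rw [Finset.mem_range] at hi
    rcases hwalk i hi with ⟨h1, h2, h3⟩ | ⟨h1, h2⟩ | ⟨h1, h2⟩ | ⟨h1, h2⟩
    · have hn1 : ¬ p1 i := by simp [hp1]; omega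
      have hn2 : ¬ p2 i := by simp [hp2]; omega
      simp [hn1, hn2, h3]
    · have hy1 : p1 i := ⟨h1, h2⟩
      have hn2 : ¬ p2 i := by simp [hp2]; omega
      rw [if_pos hy1, if_neg hn2, h1, h2]
      push_cast
      ring
    · have hn1 : ¬ p1 i := by simp [hp1]; omega
      have hn2 : ¬ p2 i := by simp [hp2]; omega
      simp [hn1, hn2, h1, h2]
    · have hn1 : ¬ p1 i := by simp [hp1]; omega
      have hy2 : p2 i := h1
      rw [if_neg hn1, if_pos hy2, h1, h2]
      push_cast
      ring
  have tel : ∑ i ∈ Finset.range m, ((u (i + 1) : ℤ) - u i) = (u m : ℤ) - u 0 :=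
    Finset.sum_range_sub (fun i => (u i : ℤ)) m
  have hsum := Finset.sum_congr rfl key
  rw [tel] at hsum
  have h1 : ∑ i ∈ Finset.range m, (if p1 i then (k : ℤ) else 0) =
      ((Finset.range m).filter p1).card * k := by
    rw [← Finset.sum_filter, Finset.sum_const, nsmul_eq_mul]
  have h2 : ∑ i ∈ Finset.range m, (if p2 i then (k : ℤ) + 1 else 0) =
      ((Finset.range m).filter p2).card * ((k : ℤ) + 1) := by
    rw [← Finset.sum_filter, Finset.sum_const, nsmul_eq_mul]
  rw [Finset.sum_sub_distrib, Finset.sum_sub_distrib, Finset.sum_const, h1, h2,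
    Finset.card_range, nsmul_eq_mul, mul_one] at hsum
  refine ⟨((Finset.range m).filter p1).card, ((Finset.range m).filter p2).card, ?_⟩
  have : (u m : ℤ) - u 0 = 0 := by rw [hclosed]; ring
  rw [this] at hsum
  have := hsum.symm
  push_cast at this ⊢
  nlinarith [this]
end

section
/- For every integer k ≥ 2, every closed directed walk of length k·(k+1) in the digraph H1(k) either never visits the vertex k+1 or never uses the arc k→1. -/
open Finset

theorem Nat.eq_zero_or_eq_zero_of_mul_add_succ_mul_eq {k a b : ℕ}
    (h : k * a + (k + 1) * b = k * (k + 1)) : a = 0 ∨ b = 0 := by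
  have hdvd : k + 1 ∣ a := by
    have : k + 1 ∣ k * a := (Nat.dvd_add_left (dvd_mul_right _ b)).mp (h ▸ dvd_mul_left _ k)
    exact (Nat.coprime_self_add_left.mpr (Nat.coprime_one_left k)).dvd_of_dvd_mul_left this
  rcases Nat.eq_zero_or_pos a with ha | ha
  · exact .inl ha
  · have : k * (k + 1) ≤ k * a := Nat.mul_le_mul_left k (Nat.le_of_dvd ha hdvd)
    right
    nlinarith

namespace H1Arc

theorem sub_eq {k a b : ℕ} (h : H1Arc k a b) :
    (b : ℤ) - a = 1 - k * (if a = k ∧ b = 1 then 1 else 0)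
      - (k + 1) * (if a = k + 1 then 1 else 0) := by
  rcases h with ⟨-, hlt, rfl⟩ | ⟨rfl, rfl⟩ | ⟨rfl, rfl⟩ | ⟨rfl, rfl⟩ <;> split_ifs <;> omega

theorem mul_card_add_mul_card_eq_of_closed {k n : ℕ} {u : ℕ → ℕ}
    (hwalk : ∀ i < n, H1Arc k (u i) (u (i + 1))) (hclosed : u 0 = u n) :
    k * #{i ∈ range n | u i = k ∧ u (i + 1) = 1} + (k + 1) * #{i ∈ range n | u i = k + 1} = n := by
  have htelescope : ∑ i ∈ range n, ((u (i + 1) : ℤ) - u i) = 0 := by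
    rw [sum_range_sub (fun i => (u i : ℤ)), hclosed, sub_self]
  rw [sum_congr rfl fun i hi => sub_eq (hwalk i (mem_range.mp hi)), sum_sub_distrib,
    sum_sub_distrib, ← mul_sum, ← mul_sum, sum_boole, sum_boole] at htelescope
  simp only [sum_const, card_range, nsmul_eq_mul, mul_one] at htelescope
  rw [← Nat.cast_inj (R := ℤ)]
  push_cast
  linarith

end H1Arc

theorem stmt_13_general (k : ℕ) (u : ℕ → ℕ)
    (hwalk : ∀ i < k * (k + 1), H1Arc k (u i) (u (i + 1)))
    (hclosed : u 0 = u (k * (k + 1))) :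
    (∀ i ≤ k * (k + 1), u i ≠ k + 1) ∨
    (∀ i < k * (k + 1), ¬ (u i = k ∧ u (i + 1) = 1)) := by
  refine or_iff_not_imp_right.mpr fun hused => ?_
  push Not at hused
  obtain ⟨j, hj, harc⟩ := hused
  have hno_visit : ∀ i < k * (k + 1), u i ≠ k + 1 := by
    have hcount := H1Arc.mul_card_add_mul_card_eq_of_closed hwalk hclosed
    rcases Nat.eq_zero_or_eq_zero_of_mul_add_succ_mul_eq hcount with ha | hb
    · exact absurd ha (card_pos.mpr ⟨j, mem_filter.mpr ⟨mem_range.mpr hj, harc⟩⟩).ne'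
    · simpa [card_eq_zero, filter_eq_empty_iff] using hb
  intro i hi
  rcases hi.lt_or_eq with hi | rfl
  · exact hno_visit i hi
  · exact hclosed ▸ hno_visit 0 (by omega)

/-- For `k ≥ 2`, every closed directed walk of length `k·(k+1)` in `H1(k)`
either never visits the vertex `k+1` or never uses the arc `k → 1`. -/
theorem stmt_13 (k : ℕ) (hk : 2 ≤ k) (u : ℕ → ℕ)
    (hwalk : ∀ i < k * (k + 1), H1Arc k (u i) (u (i + 1)))
    (hclosed : u 0 = u (k * (k + 1))) :
    (∀ i ≤ k * (k + 1), u i ≠ k + 1) ∨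
    (∀ i < k * (k + 1), ¬ (u i = k ∧ u (i + 1) = 1)) :=
  stmt_13_general k u hwalk hclosed
end

section
/- Let H be a locally semicomplete digraph, let C: v_1→v_2→…→v_k→v_1 be an induced directed cycle of H with k ≥ 4, and let x be a vertex of H not on C. Then at most two vertices of C dominate x, and if exactly two do, they are consecutive on C; likewise, x dominates at most two vertices of C, and if exactly two, they are consecutive on C. Consequently, x is adjacent to at most four vertices of C. -/
/-!
Local semicompleteness makes any two in-neighbours of `x`, and any two out-neighbours of `x`,
adjacent. On an induced cycle two vertices are adjacent only when they are consecutive, and no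
three residues mod `k` are pairwise consecutive unless `k ∣ 3`.
-/

theorem Fin.val_add_one_eq_ite {k : ℕ} [NeZero k] (hk : 2 ≤ k) (a : Fin k) :
    ((a + 1 : Fin k) : ℕ) = if a.val + 1 = k then 0 else a.val + 1 := by
  rw [Fin.val_add, Fin.val_one', Nat.one_mod_eq_one.mpr (by omega)]
  split_ifs with h
  · rw [h, Nat.mod_self]
  · exact Nat.mod_eq_of_lt (by omega)

theorem Fin.card_le_two_of_pairwise_consecutive {k : ℕ} [NeZero k] (hk : 4 ≤ k)
    {S : Finset (Fin k)} (hS : (S : Set (Fin k)).Pairwise fun i j => j = i + 1 ∨ i = j + 1) :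
    S.card ≤ 2 := by
  by_contra! h
  obtain ⟨a, ha, b, hb, c, hc, hab, hac, hbc⟩ := Finset.two_lt_card.mp h
  have hval := Fin.val_add_one_eq_ite (by omega : 2 ≤ k)
  have := a.isLt; have := b.isLt; have := c.isLt
  rcases hS ha hb hab with e1 | e1 <;> rcases hS ha hc hac with e2 | e2 <;>
    rcases hS hb hc hbc with e3 | e3 <;>
    · simp only [Fin.ext_iff, hval] at e1 e2 e3 hab hac hbc
      split_ifs at e1 e2 e3 <;> omega

theorem Fin.exists_eq_pair_of_pairwise_consecutive {k : ℕ} [NeZero k] {S : Finset (Fin k)}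
    (hS : (S : Set (Fin k)).Pairwise fun i j => j = i + 1 ∨ i = j + 1) (h2 : S.card = 2) :
    ∃ i, S = {i, i + 1} := by
  obtain ⟨a, b, hab, rfl⟩ := Finset.card_eq_two.mp h2
  rcases hS (by simp) (by simp) hab with rfl | rfl
  · exact ⟨a, rfl⟩
  · exact ⟨b, Finset.pair_comm _ _⟩

theorem pairwise_consecutive_of_pairwise_adj {V : Type} (A : V → V → Prop) {k : ℕ} [NeZero k]
    (v : Fin k → V) (hinduced : ∀ i j : Fin k, A (v i) (v j) ↔ j = i + 1) {S : Set (Fin k)}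
    (hS : S.Pairwise fun i j => A (v i) (v j) ∨ A (v j) (v i)) :
    S.Pairwise fun i j => j = i + 1 ∨ i = j + 1 :=
  hS.imp fun i j => Or.imp (hinduced i j).mp (hinduced j i).mp

theorem stmt_14_general {V : Type} (A : V → V → Prop)
    [DecidableRel A]
    (hloc_out : ∀ x y z : V, y ≠ z → A x y → A x z → (A y z ∨ A z y))
    (hloc_in : ∀ x y z : V, y ≠ z → A y x → A z x → (A y z ∨ A z y))
    (k : ℕ) [NeZero k] (hk : 4 ≤ k) (v : Fin k → V) (hinj : Function.Injective v)
    (hinduced : ∀ i j : Fin k, A (v i) (v j) ↔ j = i + 1)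
    (x : V) :
    (Finset.univ.filter fun i : Fin k => A (v i) x).card ≤ 2 ∧
    ((Finset.univ.filter fun i : Fin k => A (v i) x).card = 2 →
      ∃ i : Fin k, (Finset.univ.filter fun i : Fin k => A (v i) x) = {i, i + 1}) ∧
    (Finset.univ.filter fun i : Fin k => A x (v i)).card ≤ 2 ∧
    ((Finset.univ.filter fun i : Fin k => A x (v i)).card = 2 →
      ∃ i : Fin k, (Finset.univ.filter fun i : Fin k => A x (v i)) = {i, i + 1}) ∧
    (Finset.univ.filter fun i : Fin k => A (v i) x ∨ A x (v i)).card ≤ 4 := by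
  set inNbrs := Finset.univ.filter fun i : Fin k => A (v i) x
  set outNbrs := Finset.univ.filter fun i : Fin k => A x (v i)
  have hIn := pairwise_consecutive_of_pairwise_adj A v hinduced (S := inNbrs)
    fun i hi j hj hij =>
      hloc_in x _ _ (hinj.ne hij) (Finset.mem_filter.mp hi).2 (Finset.mem_filter.mp hj).2
  have hOut := pairwise_consecutive_of_pairwise_adj A v hinduced (S := outNbrs)
    fun i hi j hj hij =>
      hloc_out x _ _ (hinj.ne hij) (Finset.mem_filter.mp hi).2 (Finset.mem_filter.mp hj).2
  have hInCard := Fin.card_le_two_of_pairwise_consecutive hk hIn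
  have hOutCard := Fin.card_le_two_of_pairwise_consecutive hk hOut
  refine ⟨hInCard, Fin.exists_eq_pair_of_pairwise_consecutive hIn, hOutCard,
    Fin.exists_eq_pair_of_pairwise_consecutive hOut, ?_⟩
  rw [Finset.filter_or]
  exact (Finset.card_union_le inNbrs outNbrs).trans (by omega)

/-- If `C : v_1 → … → v_k → v_1` (`k ≥ 4`) is an induced directed cycle of
a locally semicomplete digraph and `x` is a vertex not on `C`, then at most two vertices
of `C` dominate `x` (and if exactly two, they are consecutive), `x` dominates at most two
vertices of `C` (and if exactly two, they are consecutive), and `x` is adjacent to at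
most four vertices of `C`. -/
theorem stmt_14 {V : Type} [Fintype V] [DecidableEq V] (A : V → V → Prop)
    [DecidableRel A]
    (hirr : ∀ v, ¬ A v v)
    (hloc_out : ∀ x y z : V, y ≠ z → A x y → A x z → (A y z ∨ A z y))
    (hloc_in : ∀ x y z : V, y ≠ z → A y x → A z x → (A y z ∨ A z y))
    (k : ℕ) [NeZero k] (hk : 4 ≤ k) (v : Fin k → V) (hinj : Function.Injective v)
    (hinduced : ∀ i j : Fin k, A (v i) (v j) ↔ j = i + 1)
    (x : V) (hx : ∀ i : Fin k, v i ≠ x) :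
    (Finset.univ.filter fun i : Fin k => A (v i) x).card ≤ 2 ∧
    ((Finset.univ.filter fun i : Fin k => A (v i) x).card = 2 →
      ∃ i : Fin k, (Finset.univ.filter fun i : Fin k => A (v i) x) = {i, i + 1}) ∧
    (Finset.univ.filter fun i : Fin k => A x (v i)).card ≤ 2 ∧
    ((Finset.univ.filter fun i : Fin k => A x (v i)).card = 2 →
      ∃ i : Fin k, (Finset.univ.filter fun i : Fin k => A x (v i)) = {i, i + 1}) ∧
    (Finset.univ.filter fun i : Fin k => A (v i) x ∨ A x (v i)).card ≤ 4 :=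
  stmt_14_general A hloc_out hloc_in k hk v hinj hinduced x
end

section
/- Let H be a connected quasi-transitive digraph with no symmetric arcs that contains a directed cycle and is not an extension of the directed triangle C3. Then H contains four distinct vertices that induce a semicomplete subdigraph containing a directed cycle. -/
/-!
Shortcutting a directed cycle by quasi-transitivity yields a directed triangle
`t 0 → t 1 → t 2`. If no four vertices induce a semicomplete digraph with a directed cycle,
then no vertex outside a directed triangle is adjacent to all three of its vertices. Under this
assumption every neighbour of a vertex of the triangle can replace one of `t 0, t 1, t 2` in it,
i.e. lies in one of three slots, and this property spreads along edges, so by connectivity every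
vertex lies in a slot. Comparing two vertices with the triangle shows that arcs go exactly from
each slot to the next one, so the slots exhibit the digraph as an extension of `C3`.
-/

variable {V : Type} {A : V → V → Prop}

def IsQuasiTransitive (A : V → V → Prop) : Prop :=
  ∀ x y z : V, x ≠ z → A x y → A y z → (A x z ∨ A z x)

def Adjacent (A : V → V → Prop) (u w : V) : Prop := A u w ∨ A w u

def NoTriangleWithCommonNeighbour (A : V → V → Prop) : Prop :=
  ∀ p q r d : V, A p q → A q r → A r p →
    ¬ (Adjacent A d p ∧ Adjacent A d q ∧ Adjacent A d r)

def HasCyclicSemicompleteQuadruple (A : V → V → Prop) : Prop :=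
  ∃ a b c d : V, a ≠ b ∧ a ≠ c ∧ a ≠ d ∧ b ≠ c ∧ b ≠ d ∧ c ≠ d ∧
    (∀ p ∈ ({a, b, c, d} : Set V), ∀ q ∈ ({a, b, c, d} : Set V), p ≠ q →
      (A p q ∨ A q p)) ∧
    (∃ p q : V, p ∈ ({a, b, c, d} : Set V) ∧ q ∈ ({a, b, c, d} : Set V) ∧ A p q ∧
      Relation.ReflTransGen
        (fun u w => u ∈ ({a, b, c, d} : Set V) ∧ w ∈ ({a, b, c, d} : Set V) ∧ A u w)
        q p)

def IsC3Extension (A : V → V → Prop) : Prop :=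
  ∃ X : V → Fin 3, (∀ i : Fin 3, ∃ u, X u = i) ∧ (∀ u w : V, A u w ↔ X w = X u + 1)

/-- The vertices that can replace `t i` in the directed triangle `t`. -/
def triangleSlot (A : V → V → Prop) (t : Fin 3 → V) (i : Fin 3) : Set V :=
  {u | A (t (i + 2)) u ∧ A u (t (i + 1))}

lemma ne_of_arc (hasym : ∀ x y : V, A x y → ¬ A y x) {u w : V} (h : A u w) : u ≠ w := by
  rintro rfl
  exact hasym _ _ h h

lemma Adjacent.ne (hasym : ∀ x y : V, A x y → ¬ A y x) {u w : V} (h : Adjacent A u w) :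
    u ≠ w :=
  h.elim (ne_of_arc hasym) (fun h => (ne_of_arc hasym h).symm)

lemma exists_triangle_of_cycle (hqt : IsQuasiTransitive A) (hasym : ∀ x y : V, A x y → ¬ A y x)
    {x y : V} (hxy : A x y) (hyx : Relation.ReflTransGen A y x) :
    ∃ t : Fin 3 → V, ∀ i, A (t i) (t (i + 1)) := by
  induction hyx using Relation.ReflTransGen.head_induction_on with
  | refl => exact (ne_of_arc hasym hxy rfl).elim
  | @head y v hyv _ ih =>
    by_cases hxv : x = v
    · subst hxv
      exact (hasym _ _ hxy hyv).elim
    rcases hqt x y v hxv hxy hyv with hxv' | hvx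
    · exact ih hxv'
    · exact ⟨![x, y, v], fun i => by fin_cases i <;> assumption⟩

lemma hasCyclicSemicompleteQuadruple_of_triangle (hasym : ∀ x y : V, A x y → ¬ A y x)
    {p q r d : V} (hpq : A p q) (hqr : A q r) (hrp : A r p)
    (hd : Adjacent A d p ∧ Adjacent A d q ∧ Adjacent A d r) :
    HasCyclicSemicompleteQuadruple A := by
  obtain ⟨hdp, hdq, hdr⟩ := hd
  unfold Adjacent at hdp hdq hdr
  refine ⟨p, q, r, d, ne_of_arc hasym hpq, (ne_of_arc hasym hrp).symm,
    (Adjacent.ne hasym hdp).symm, ne_of_arc hasym hqr, (Adjacent.ne hasym hdq).symm,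
    (Adjacent.ne hasym hdr).symm, ?_, ?_⟩
  · intro x hx y hy hxy
    simp only [Set.mem_insert_iff, Set.mem_singleton_iff] at hx hy
    rcases hx with rfl | rfl | rfl | rfl <;> rcases hy with rfl | rfl | rfl | rfl <;> tauto
  · refine ⟨p, q, by simp, by simp, hpq, ?_⟩
    exact .head ⟨by simp, by simp, hqr⟩ (.head ⟨by simp, by simp, hrp⟩ .refl)

section Slots

variable {t : Fin 3 → V}

lemma triangle_arcs (ht : ∀ i, A (t i) (t (i + 1))) (i : Fin 3) :
    A (t i) (t (i + 1)) ∧ A (t (i + 1)) (t (i + 2)) ∧ A (t (i + 2)) (t i) := by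
  refine ⟨ht i, ?_, ?_⟩
  · simpa [add_assoc] using ht (i + 1)
  · simpa [add_assoc] using ht (i + 2)

lemma mem_triangleSlot_self (ht : ∀ i, A (t i) (t (i + 1))) (i : Fin 3) :
    t i ∈ triangleSlot A t i :=
  ⟨(triangle_arcs ht i).2.2, ht i⟩

lemma mem_triangleSlot_of_arc_to (hqt : IsQuasiTransitive A)
    (hasym : ∀ x y : V, A x y → ¬ A y x) (hK : NoTriangleWithCommonNeighbour A)
    (ht : ∀ i, A (t i) (t (i + 1))) {i : Fin 3} {u : V} (hu : A u (t i)) :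
    u ∈ triangleSlot A t i ∨ u ∈ triangleSlot A t (i + 2) := by
  obtain ⟨hab, hbc, hca⟩ := triangle_arcs ht i
  simp only [triangleSlot, Set.mem_ofPred_eq, add_assoc, Fin.reduceAdd, add_zero]
  by_cases hub : u = t (i + 1)
  · subst hub
    exact (hasym _ _ hab hu).elim
  by_cases huc : u = t (i + 2)
  · subst huc
    exact Or.inr ⟨hbc, hca⟩
  rcases hqt u _ _ hub hu hab with hub' | hbu
  · rcases hqt u _ _ huc hub' hbc with huc' | hcu
    · exact (hK _ _ _ u hab hbc hca ⟨Or.inl hu, Or.inl hub', Or.inl huc'⟩).elim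
    · exact Or.inl ⟨hcu, hub'⟩
  · exact Or.inr ⟨hbu, hu⟩

lemma mem_triangleSlot_of_arc_from (hqt : IsQuasiTransitive A)
    (hasym : ∀ x y : V, A x y → ¬ A y x) (hK : NoTriangleWithCommonNeighbour A)
    (ht : ∀ i, A (t i) (t (i + 1))) {i : Fin 3} {u : V} (hu : A (t i) u) :
    u ∈ triangleSlot A t i ∨ u ∈ triangleSlot A t (i + 1) := by
  obtain ⟨hab, hbc, hca⟩ := triangle_arcs ht i
  simp only [triangleSlot, Set.mem_ofPred_eq, add_assoc, Fin.reduceAdd, add_zero]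
  by_cases hcu : t (i + 2) = u
  · subst hcu
    exact (hasym _ _ hca hu).elim
  by_cases hbu : t (i + 1) = u
  · subst hbu
    exact Or.inr ⟨hab, hbc⟩
  rcases hqt _ _ u hcu hca hu with hcu' | huc
  · rcases hqt _ _ u hbu hbc hcu' with hbu' | hub
    · exact (hK _ _ _ u hab hbc hca ⟨Or.inr hu, Or.inr hbu', Or.inr hcu'⟩).elim
    · exact Or.inl ⟨hcu', hub⟩
  · exact Or.inr ⟨hu, huc⟩

lemma exists_mem_triangleSlot_of_adjacent_vertex (hqt : IsQuasiTransitive A)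
    (hasym : ∀ x y : V, A x y → ¬ A y x) (hK : NoTriangleWithCommonNeighbour A)
    (ht : ∀ i, A (t i) (t (i + 1))) {i : Fin 3} {u : V} (hu : Adjacent A u (t i)) :
    ∃ j, u ∈ triangleSlot A t j := by
  rcases hu with hu | hu
  · rcases mem_triangleSlot_of_arc_to hqt hasym hK ht hu with h | h <;> exact ⟨_, h⟩
  · rcases mem_triangleSlot_of_arc_from hqt hasym hK ht hu with h | h <;> exact ⟨_, h⟩

lemma exists_mem_triangleSlot_of_adjacent (hqt : IsQuasiTransitive A)
    (hasym : ∀ x y : V, A x y → ¬ A y x) (hK : NoTriangleWithCommonNeighbour A)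
    (ht : ∀ i, A (t i) (t (i + 1))) {i : Fin 3} {u w : V} (hu : u ∈ triangleSlot A t i)
    (huw : Adjacent A u w) : ∃ j, w ∈ triangleSlot A t j := by
  obtain ⟨hcu, hub⟩ := hu
  rcases huw with huw | hwu
  · have hcw : t (i + 2) ≠ w := by
      rintro rfl
      exact hasym _ _ hcu huw
    exact exists_mem_triangleSlot_of_adjacent_vertex hqt hasym hK ht
      (hqt _ _ _ hcw hcu huw).symm
  · have hwb : w ≠ t (i + 1) := by
      rintro rfl
      exact hasym _ _ hub hwu
    exact exists_mem_triangleSlot_of_adjacent_vertex hqt hasym hK ht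
      (hqt _ _ _ hwb hwu hub)

lemma exists_mem_triangleSlot (hqt : IsQuasiTransitive A)
    (hasym : ∀ x y : V, A x y → ¬ A y x) (hK : NoTriangleWithCommonNeighbour A)
    (hconn : ∀ x y : V, Relation.ReflTransGen (Adjacent A) x y)
    (ht : ∀ i, A (t i) (t (i + 1))) (u : V) : ∃ j, u ∈ triangleSlot A t j := by
  induction hconn (t 0) u with
  | refl => exact ⟨0, mem_triangleSlot_self ht 0⟩
  | tail _ hvw ih =>
    obtain ⟨j, hv⟩ := ih
    exact exists_mem_triangleSlot_of_adjacent hqt hasym hK ht hv hvw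

lemma not_arc_of_mem_triangleSlot (hK : NoTriangleWithCommonNeighbour A)
    (ht : ∀ i, A (t i) (t (i + 1))) {i : Fin 3} {u w : V} (hu : u ∈ triangleSlot A t i)
    (hw : w ∈ triangleSlot A t i) : ¬ A u w := fun huw =>
  hK w _ _ u hw.2 (triangle_arcs ht i).2.1 hw.1 ⟨Or.inl huw, Or.inl hu.2, Or.inr hu.1⟩

lemma arc_of_mem_triangleSlot_of_mem_triangleSlot_add_one (hqt : IsQuasiTransitive A)
    (hasym : ∀ x y : V, A x y → ¬ A y x) (hK : NoTriangleWithCommonNeighbour A)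
    (ht : ∀ i, A (t i) (t (i + 1))) {i : Fin 3} {u w : V} (hu : u ∈ triangleSlot A t i)
    (hw : w ∈ triangleSlot A t (i + 1)) : A u w := by
  obtain ⟨hcu, hub⟩ := hu
  have hwc : A w (t (i + 2)) := by simpa [add_assoc] using hw.2
  have hwu : w ≠ u := by
    rintro rfl
    exact hasym _ _ hwc hcu
  refine (hqt w _ u hwu hwc hcu).resolve_left fun hwu' => ?_
  have hwb : w ≠ t (i + 1) := by
    rintro rfl
    exact hasym _ _ hub hwu'
  exact hK u _ _ w hub (triangle_arcs ht i).2.1 hcu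
    ⟨Or.inl hwu', hqt _ _ _ hwb hwu' hub, Or.inl hwc⟩

lemma Fin.eq_or_eq_add_one_or_eq_add_two (i j : Fin 3) : j = i ∨ j = i + 1 ∨ j = i + 2 := by
  revert i j
  decide

lemma arc_iff_of_mem_triangleSlot (hqt : IsQuasiTransitive A)
    (hasym : ∀ x y : V, A x y → ¬ A y x) (hK : NoTriangleWithCommonNeighbour A)
    (ht : ∀ i, A (t i) (t (i + 1))) {i j : Fin 3} {u w : V} (hu : u ∈ triangleSlot A t i)
    (hw : w ∈ triangleSlot A t j) : A u w ↔ j = i + 1 := by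
  rcases Fin.eq_or_eq_add_one_or_eq_add_two i j with rfl | rfl | rfl
  · simpa using not_arc_of_mem_triangleSlot hK ht hu hw
  · simpa using arc_of_mem_triangleSlot_of_mem_triangleSlot_add_one hqt hasym hK ht hu hw
  · have hu' : u ∈ triangleSlot A t (i + 2 + 1) := by simpa [add_assoc] using hu
    have hwu := arc_of_mem_triangleSlot_of_mem_triangleSlot_add_one hqt hasym hK ht hw hu'
    simpa using hasym _ _ hwu

lemma triangleSlot_unique (hqt : IsQuasiTransitive A)
    (hasym : ∀ x y : V, A x y → ¬ A y x) (hK : NoTriangleWithCommonNeighbour A)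
    (ht : ∀ i, A (t i) (t (i + 1))) {i j : Fin 3} {u : V} (hi : u ∈ triangleSlot A t i)
    (hj : u ∈ triangleSlot A t j) : i = j := by
  have hloop : ¬ A u u := fun h => ne_of_arc hasym h rfl
  rcases Fin.eq_or_eq_add_one_or_eq_add_two i j with rfl | rfl | rfl
  · rfl
  · exact (hloop ((arc_iff_of_mem_triangleSlot hqt hasym hK ht hi hj).mpr rfl)).elim
  · exact (hloop ((arc_iff_of_mem_triangleSlot hqt hasym hK ht hj hi).mpr
      (by simp [add_assoc]))).elim

theorem isC3Extension_of_triangle (hqt : IsQuasiTransitive A)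
    (hasym : ∀ x y : V, A x y → ¬ A y x) (hK : NoTriangleWithCommonNeighbour A)
    (hconn : ∀ x y : V, Relation.ReflTransGen (Adjacent A) x y)
    (ht : ∀ i, A (t i) (t (i + 1))) : IsC3Extension A := by
  choose X hX using exists_mem_triangleSlot hqt hasym hK hconn ht
  refine ⟨X, fun i => ⟨t i, ?_⟩, fun u w => ?_⟩
  · exact triangleSlot_unique hqt hasym hK ht (hX (t i)) (mem_triangleSlot_self ht i)
  · exact arc_iff_of_mem_triangleSlot hqt hasym hK ht (hX u) (hX w)

end Slots

theorem stmt_17_general {V : Type} (A : V → V → Prop)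
    (hqt : ∀ x y z : V, x ≠ z → A x y → A y z → (A x z ∨ A z x))
    (hasym : ∀ x y : V, A x y → ¬ A y x)
    (hconn : ∀ x y : V, Relation.ReflTransGen (fun u w => A u w ∨ A w u) x y)
    (hcyc : ∃ x y : V, A x y ∧ Relation.ReflTransGen A y x)
    (hnotext : ¬ ∃ X : V → Fin 3, (∀ i : Fin 3, ∃ u, X u = i) ∧
        (∀ u w : V, A u w ↔ X w = X u + 1)) :
    ∃ a b c d : V, a ≠ b ∧ a ≠ c ∧ a ≠ d ∧ b ≠ c ∧ b ≠ d ∧ c ≠ d ∧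
      (∀ p ∈ ({a, b, c, d} : Set V), ∀ q ∈ ({a, b, c, d} : Set V), p ≠ q →
        (A p q ∨ A q p)) ∧
      (∃ p q : V, p ∈ ({a, b, c, d} : Set V) ∧ q ∈ ({a, b, c, d} : Set V) ∧ A p q ∧
        Relation.ReflTransGen
          (fun u w => u ∈ ({a, b, c, d} : Set V) ∧ w ∈ ({a, b, c, d} : Set V) ∧ A u w)
          q p) := by
  by_contra hquad
  have hK : NoTriangleWithCommonNeighbour A := fun _ _ _ _ hpq hqr hrp hd =>
    hquad (hasCyclicSemicompleteQuadruple_of_triangle hasym hpq hqr hrp hd)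
  obtain ⟨x, y, hxy, hyx⟩ := hcyc
  obtain ⟨t, ht⟩ := exists_triangle_of_cycle hqt hasym hxy hyx
  exact hnotext (isC3Extension_of_triangle hqt hasym hK hconn ht)

/-- A connected quasi-transitive digraph without symmetric arcs that
contains a directed cycle and is not an extension of the directed triangle `C3` has four
distinct vertices inducing a semicomplete subdigraph that contains a directed cycle. -/
theorem stmt_17 {V : Type} [Fintype V] (A : V → V → Prop)
    (hirr : ∀ v, ¬ A v v)
    (hqt : ∀ x y z : V, x ≠ z → A x y → A y z → (A x z ∨ A z x))
    (hasym : ∀ x y : V, A x y → ¬ A y x)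
    (hconn : ∀ x y : V, Relation.ReflTransGen (fun u w => A u w ∨ A w u) x y)
    (hcyc : ∃ x y : V, A x y ∧ Relation.ReflTransGen A y x)
    (hnotext : ¬ ∃ X : V → Fin 3, (∀ i : Fin 3, ∃ u, X u = i) ∧
        (∀ u w : V, A u w ↔ X w = X u + 1)) :
    ∃ a b c d : V, a ≠ b ∧ a ≠ c ∧ a ≠ d ∧ b ≠ c ∧ b ≠ d ∧ c ≠ d ∧
      (∀ p ∈ ({a, b, c, d} : Set V), ∀ q ∈ ({a, b, c, d} : Set V), p ≠ q →
        (A p q ∨ A q p)) ∧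
      (∃ p q : V, p ∈ ({a, b, c, d} : Set V) ∧ q ∈ ({a, b, c, d} : Set V) ∧ A p q ∧
        Relation.ReflTransGen
          (fun u w => u ∈ ({a, b, c, d} : Set V) ∧ w ∈ ({a, b, c, d} : Set V) ∧ A u w)
          q p) :=
  stmt_17_general A hqt hasym hconn hcyc hnotext
end
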